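/- arXiv:2407.02120 — 7 statements merged into one kernel-verified Lean document; each statement's English description precedes it below -/
import Mathlib

section
/- Let Υ = (M, C, O) be a compatibility scenario and B a behavior on Υ. Then B is noncontextual (i.e. admits a global section: a probability distribution p_M on O^M whose marginal on each maximal context γ ∈ C equals p_γ) if and only if B is factorizable. -/
noncomputable section

/-- A compatibility scenario: a finite set of measurements `M`, finite nonempty
outcome sets `O x` for each measurement, and an antichain `C` of maximal contexts. -/
structure Scenario where
  M : Type
  [fintypeM : Fintype M]
  [decEqM : DecidableEq M]
  O : M → Type
  [fintypeO : ∀ x, Fintype (O x)]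
  [decEqO : ∀ x, DecidableEq (O x)]
  [nonemptyO : ∀ x, Nonempty (O x)]
  C : Finset (Finset M)
  antichain : ∀ γ ∈ C, ∀ γ' ∈ C, γ ⊆ γ' → γ = γ'

attribute [instance] Scenario.fintypeM Scenario.decEqM Scenario.fintypeO
  Scenario.decEqO Scenario.nonemptyO

/-- The elements of a set of measurements, as a type. -/
def Scenario.El (S : Scenario) (γ : Finset S.M) : Type := {x : S.M // x ∈ γ}

instance (S : Scenario) (γ : Finset S.M) : Fintype (S.El γ) :=
  show Fintype {x : S.M // x ∈ γ} from inferInstance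

instance (S : Scenario) (γ : Finset S.M) : DecidableEq (S.El γ) :=
  show DecidableEq {x : S.M // x ∈ γ} from inferInstance

/-- Joint outcomes `O^γ` of a set of measurements `γ`. -/
def Scenario.JO (S : Scenario) (γ : Finset S.M) : Type := (x : S.El γ) → S.O x.1

instance (S : Scenario) (γ : Finset S.M) : Fintype (S.JO γ) :=
  show Fintype ((x : S.El γ) → S.O x.1) from inferInstance

instance (S : Scenario) (γ : Finset S.M) : DecidableEq (S.JO γ) :=
  show DecidableEq ((x : S.El γ) → S.O x.1) from inferInstance

instance (S : Scenario) (γ : Finset S.M) : Nonempty (S.JO γ) :=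
  ⟨fun _ => Classical.arbitrary _⟩

/-- Global outcome assignments `O^M`. -/
abbrev Scenario.Glob (S : Scenario) : Type := (x : S.M) → S.O x

/-- Restriction of a global assignment to a set of measurements. -/
def Scenario.restr (S : Scenario) (γ : Finset S.M) (o : S.Glob) : S.JO γ :=
  fun x => o x.1

/-- The (maximal) contexts of a scenario. -/
def Scenario.Ctx (S : Scenario) : Type := {γ : Finset S.M // γ ∈ S.C}

instance (S : Scenario) : Fintype S.Ctx :=
  show Fintype {γ : Finset S.M // γ ∈ S.C} from inferInstance

instance (S : Scenario) : DecidableEq S.Ctx :=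
  show DecidableEq {γ : Finset S.M // γ ∈ S.C} from inferInstance

/-- A behavior (box): a family of real-valued functions, one for each maximal context. -/
def Behavior (S : Scenario) : Type := (γ : S.Ctx) → S.JO γ.1 → ℝ

/-- The family forms a probability distribution on each maximal context. -/
def IsProb (S : Scenario) (B : Behavior S) : Prop :=
  ∀ γ : S.Ctx, (∀ t, 0 ≤ B γ t) ∧ (∑ t, B γ t = 1)

/-- Kochen–Specker noncontextuality: existence of a global section, i.e. a probability
distribution on `O^M` whose marginal on each maximal context equals the behavior. -/
def IsNC (S : Scenario) (B : Behavior S) : Prop :=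
  ∃ pM : S.Glob → ℝ, (∀ o, 0 ≤ pM o) ∧ (∑ o, pM o = 1) ∧
    ∀ (γ : S.Ctx) (t : S.JO γ.1),
      B γ t = ∑ o : S.Glob, if S.restr γ.1 o = t then pM o else 0

/-- Restriction between nested sets of measurements. -/
def Scenario.restr2 (S : Scenario) {γ δ : Finset S.M} (h : δ ⊆ γ) (t : S.JO γ) :
    S.JO δ := fun x => t ⟨x.1, h x.2⟩

/-- The no-disturbance condition: marginals agree on intersections of contexts. -/
def IsND (S : Scenario) (B : Behavior S) : Prop :=
  ∀ γ γ' : S.Ctx, ∀ u : S.JO (γ.1 ∩ γ'.1),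
    (∑ t : S.JO γ.1, if S.restr2 Finset.inter_subset_left t = u then B γ t else 0) =
      (∑ t : S.JO γ'.1, if S.restr2 Finset.inter_subset_right t = u then B γ' t else 0)

/-- Factorizability: a noncontextual (hidden-variable) factorizable model. -/
def IsFactorizable (S : Scenario) (B : Behavior S) : Prop :=
  ∃ (k : ℕ) (q : Fin k → ℝ) (e : (x : S.M) → Fin k → S.O x → ℝ),
    (∀ l, 0 ≤ q l) ∧ (∑ l, q l = 1) ∧
    (∀ x l, (∀ o, 0 ≤ e x l o) ∧ (∑ o, e x l o = 1)) ∧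
    ∀ (γ : S.Ctx) (t : S.JO γ.1),
      B γ t = ∑ l, q l * ∏ x : S.El γ.1, e x.1 l (t x)

/-- The deterministic behavior induced by a global outcome assignment. -/
def detB (S : Scenario) (o : S.Glob) : Behavior S :=
  fun γ t => if S.restr γ.1 o = t then 1 else 0
/-!
A global section `p` is already a factorizable model: take the global assignments themselves as
hidden variables, each responding deterministically. Conversely, a factorizable model `(q, p_x)`
yields the global section `∑_λ q λ ∏_{x ∈ M} p_x(·|λ)`: the marginal of a product of probability
distributions on a context `γ` is the product over `γ`, since the factors off `γ` sum to `1`.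
-/

theorem Fintype.sum_pi_prod_eq_one {ι : Type*} [Fintype ι] [DecidableEq ι] {α : ι → Type*}
    [∀ i, Fintype (α i)] {R : Type*} [CommSemiring R] (g : ∀ i, α i → R)
    (hg : ∀ i, ∑ a, g i a = 1) : ∑ o : (∀ i, α i), ∏ i, g i (o i) = 1 := by
  rw [← Fintype.piFinset_univ, ← Finset.prod_univ_sum]
  exact Finset.prod_eq_one fun i _ => hg i

theorem Fintype.sum_ite_restrict_eq_prod {ι : Type*} [Fintype ι] [DecidableEq ι] {α : ι → Type*}
    [∀ i, Fintype (α i)] [∀ i, DecidableEq (α i)] {R : Type*} [CommSemiring R]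
    (g : ∀ i, α i → R) (hg : ∀ i, ∑ a, g i a = 1) (s : Finset ι) (t : ∀ i : s, α i) :
    ∑ o : (∀ i, α i), (if (fun i : s => o i) = t then ∏ i, g i (o i) else 0)
      = ∏ i : s, g i (t i) := by
  -- the constraint on `s` is absorbed into the factors, so the sum still factorizes
  set h : ∀ i, α i → R := fun i a =>
    if hi : i ∈ s then (if a = t ⟨i, hi⟩ then g i a else 0) else g i a
  have hconstr : ∀ o : ∀ i, α i,
      (if (fun i : s => o i) = t then ∏ i, g i (o i) else 0) = ∏ i, h i (o i) := by
    intro o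
    split_ifs with hot
    · refine Finset.prod_congr rfl fun i _ => ?_
      by_cases hi : i ∈ s
      · simp [h, hi, ← hot]
      · simp [h, hi]
    · obtain ⟨i, hi⟩ := Function.ne_iff.mp hot
      refine (Finset.prod_eq_zero (Finset.mem_univ i.1) ?_).symm
      simp [h, i.2, hi]
  have hsum : ∀ i, ∑ a, h i a = if hi : i ∈ s then g i (t ⟨i, hi⟩) else 1 := by
    intro i
    by_cases hi : i ∈ s
    · simp [h, hi]
    · simp [h, hi, hg i]
  simp_rw [hconstr]
  rw [← Fintype.piFinset_univ, ← Finset.prod_univ_sum, Finset.univ_eq_attach,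
    Finset.prod_attach_eq_prod_dite s]
  exact Finset.prod_congr rfl fun i _ => hsum i

theorem Fintype.prod_boole_apply_eq {κ : Type*} [Fintype κ] {β : κ → Type*}
    [∀ k, DecidableEq (β k)] {R : Type*} [CommMonoidWithZero R] (f g : ∀ k, β k) :
    ∏ k, (if f k = g k then (1 : R) else 0) = if f = g then 1 else 0 := by
  rw [Fintype.prod_boole]
  exact if_congr funext_iff.symm rfl rfl

theorem IsFactorizable.of_fintype {S : Scenario} {B : Behavior S} (Λ : Type) [Fintype Λ]
    (q : Λ → ℝ) (e : (x : S.M) → Λ → S.O x → ℝ) (hq : ∀ l, 0 ≤ q l) (hq_sum : ∑ l, q l = 1)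
    (he : ∀ x l, (∀ a, 0 ≤ e x l a) ∧ ∑ a, e x l a = 1)
    (hB : ∀ (γ : S.Ctx) (t : S.JO γ.1), B γ t = ∑ l, q l * ∏ x : S.El γ.1, e x.1 l (t x)) :
    IsFactorizable S B := by
  let σ := (Fintype.equivFin Λ).symm
  refine ⟨Fintype.card Λ, q ∘ σ, fun x l => e x (σ l), fun l => hq (σ l), ?_,
    fun x l => he x (σ l), fun γ t => ?_⟩
  · rwa [Function.comp_def, Equiv.sum_comp σ q]
  · rw [hB γ t, ← Equiv.sum_comp σ]
    rfl

theorem isFactorizable_of_isNC {S : Scenario} {B : Behavior S} (hB : IsNC S B) :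
    IsFactorizable S B := by
  obtain ⟨pM, hpM, hpM_sum, hmarg⟩ := hB
  refine IsFactorizable.of_fintype S.Glob pM (fun x o a => if o x = a then 1 else 0) hpM hpM_sum
    (fun x o => ⟨fun a => by positivity, by simp⟩) fun γ t => ?_
  rw [hmarg γ t]
  refine Finset.sum_congr rfl fun o _ => ?_
  rw [← mul_boole]
  exact congrArg _ (Fintype.prod_boole_apply_eq (S.restr γ.1 o) t).symm

theorem isNC_of_isFactorizable {S : Scenario} {B : Behavior S} (hB : IsFactorizable S B) :
    IsNC S B := by
  obtain ⟨k, q, e, hq, hq_sum, he, hfac⟩ := hB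
  refine ⟨fun o => ∑ l, q l * ∏ x, e x l (o x), fun o => ?_, ?_, fun γ t => ?_⟩
  · exact Finset.sum_nonneg fun l _ =>
      mul_nonneg (hq l) (Finset.prod_nonneg fun x _ => (he x l).1 _)
  · rw [Finset.sum_comm]
    simp_rw [← Finset.mul_sum, Fintype.sum_pi_prod_eq_one _ fun x => (he x _).2, mul_one, hq_sum]
  · have hmarginal : ∀ l, ∑ o : S.Glob, (if S.restr γ.1 o = t then ∏ x, e x l (o x) else 0) =
        ∏ x : S.El γ.1, e x.1 l (t x) := fun l =>
      Fintype.sum_ite_restrict_eq_prod (fun x => e x l) (fun x => (he x l).2) γ.1 t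
    simp_rw [hfac γ t, ← hmarginal, Finset.mul_sum, mul_ite, mul_zero]
    rw [Finset.sum_comm]
    refine Finset.sum_congr rfl fun o _ => ?_
    rw [Finset.sum_ite_irrel, Finset.sum_const_zero]

theorem statement_0_general (S : Scenario) (B : Behavior S) :
    IsNC S B ↔ IsFactorizable S B :=
  ⟨isFactorizable_of_isNC, isNC_of_isFactorizable⟩

/-- Abramsky–Brandenburger: a behavior on a compatibility scenario is
noncontextual (admits a global section) if and only if it is factorizable. -/
theorem statement_0 (S : Scenario) (B : Behavior S) (hB : IsProb S B) :
    IsNC S B ↔ IsFactorizable S B :=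
  statement_0_general S B
end
end

section
/- For every integer n ≥ 3, every odd sign vector a ∈ {−1, +1}^n, and every noncontextual behavior B on the n-cycle scenario Υ_n, the noncontextuality inequality I_a(B) ≤ n − 2 holds. -/
noncomputable section

/-- A noncontextual wiring with input scenario `S`, whose output scenario has the
measurements, maximal contexts and outcome sets of `T`.  It consists of a
noncontextual pre-processing behavior (given by its global section `pPre` on the
pre-processing outcome sets `OPre`), a function `f` selecting, from each
pre-processing context `β` and joint outcome `r`, a context of the input scenario,
a coordinatewise wiring `wmap` feeding every output measurement slot from a single
input measurement, and adaptively chosen noncontextual (factorizable)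
post-processing boxes given by a hidden variable `φ` with distribution `q β r`
and response functions `resp`. -/
structure Wiring (S T : Scenario) where
  OPre : T.M → Type
  [fintypeOPre : ∀ m, Fintype (OPre m)]
  [decEqOPre : ∀ m, DecidableEq (OPre m)]
  [nonemptyOPre : ∀ m, Nonempty (OPre m)]
  pPre : ((x : T.M) → OPre x) → ℝ
  pPre_nonneg : ∀ o, 0 ≤ pPre o
  pPre_sum : ∑ o, pPre o = 1
  f : (β : T.Ctx) → ((x : T.El β.1) → OPre x.1) → S.Ctx
  wmap : (β : T.Ctx) → (r : (x : T.El β.1) → OPre x.1) → T.El β.1 → S.El (f β r).1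
  nPhi : (β : T.Ctx) → ((x : T.El β.1) → OPre x.1) → ℕ
  q : (β : T.Ctx) → (r : (x : T.El β.1) → OPre x.1) → Fin (nPhi β r) → ℝ
  q_nonneg : ∀ β r φ, 0 ≤ q β r φ
  q_sum : ∀ β r, ∑ φ, q β r φ = 1
  resp : (β : T.Ctx) → (r : (x : T.El β.1) → OPre x.1) → (m : T.El β.1) →
    Fin (nPhi β r) → S.O (wmap β r m).1 → T.O m.1 → ℝ
  resp_nonneg : ∀ β r m φ o u, 0 ≤ resp β r m φ o u
  resp_sum : ∀ β r m φ o, ∑ u, resp β r m φ o u = 1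

attribute [instance] Wiring.fintypeOPre Wiring.decEqOPre Wiring.nonemptyOPre

/-- Marginal of the pre-processing behavior on a pre-processing context. -/
def Wiring.preB {S T : Scenario} (W : Wiring S T) (β : T.Ctx)
    (r : (x : T.El β.1) → W.OPre x.1) : ℝ :=
  ∑ o : (x : T.M) → W.OPre x,
    if (fun x : T.El β.1 => o x.1) = r then W.pPre o else 0

/-- The wired behavior `W(B)` on the output scenario. -/
def Wiring.apply {S T : Scenario} (W : Wiring S T) (B : Behavior S) : Behavior T :=
  fun β t =>
    ∑ r : (x : T.El β.1) → W.OPre x.1,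
      ∑ s : S.JO (W.f β r).1,
        W.preB β r * B (W.f β r) s *
          ∑ φ : Fin (W.nPhi β r),
            W.q β r φ * ∏ m : T.El β.1, W.resp β r m φ (s (W.wmap β r m)) (t m)

/-- Free convertibility of behaviors on a scenario by noncontextual wirings (whose
output scenario has the same maximal contexts and context-outcome sets). -/
def Arrow (S : Scenario) (B B' : Behavior S) : Prop :=
  ∃ W : Wiring S S, W.apply B = B'
/-- Successor modulo `n`. -/
def cycSucc {n : ℕ} (i : Fin n) : Fin n :=
  ⟨(i.1 + 1) % n, Nat.mod_lt _ (Nat.lt_of_le_of_lt (Nat.zero_le _) i.isLt)⟩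

/-- The maximal context `{x_i, x_{i+1 mod n}}` of the `n`-cycle scenario. -/
def cycCtx {n : ℕ} (i : Fin n) : Finset (Fin n) := {i, cycSucc i}

theorem cycSucc_ne {n : ℕ} (hn : 3 ≤ n) (i : Fin n) : i ≠ cycSucc i := by
  intro h
  have h1 : i.1 = (i.1 + 1) % n := congrArg Fin.val h
  rcases Nat.lt_or_ge (i.1 + 1) n with h3 | h3
  · rw [Nat.mod_eq_of_lt h3] at h1
    omega
  · have h2 : i.1 < n := i.isLt
    have h4 : i.1 + 1 = n := by omega
    rw [h4, Nat.mod_self] at h1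
    omega

/-- The `n`-cycle compatibility scenario: `n` dichotomic measurements with maximal
contexts `{x_i, x_{i+1 mod n}}`. -/
def cycleScenario (n : ℕ) (hn : 3 ≤ n) : Scenario where
  M := Fin n
  O := fun _ => Bool
  C := Finset.image (fun i : Fin n => cycCtx i) Finset.univ
  antichain := by
    intro γ hγ γ' hγ' hsub
    simp only [Finset.mem_image, Finset.mem_univ, true_and] at hγ hγ'
    obtain ⟨i, rfl⟩ := hγ
    obtain ⟨j, rfl⟩ := hγ'
    refine Finset.eq_of_subset_of_card_le hsub (le_of_eq ?_)
    show ({j, cycSucc j} : Finset (Fin n)).card = ({i, cycSucc i} : Finset (Fin n)).card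
    rw [Finset.card_pair (cycSucc_ne hn j), Finset.card_pair (cycSucc_ne hn i)]

theorem cycCtx_mem {n : ℕ} (hn : 3 ≤ n) (i : Fin n) :
    cycCtx i ∈ (cycleScenario n hn).C :=
  Finset.mem_image_of_mem _ (Finset.mem_univ i)

/-- The context `{x_i, x_{i+1}}` as a maximal context of the `n`-cycle scenario. -/
def cycCtxC {n : ℕ} (hn : 3 ≤ n) (i : Fin n) : (cycleScenario n hn).Ctx :=
  ⟨cycCtx i, cycCtx_mem hn i⟩

/-- The ±1 value of a Boolean outcome. -/
def sgn (b : Bool) : ℝ := if b then 1 else -1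

/-- Two-point correlator `⟨x_i x_{i+1}⟩` of a behavior at a maximal context. -/
def corrCtx {n : ℕ} {hn : 3 ≤ n} (B : Behavior (cycleScenario n hn))
    (γ : (cycleScenario n hn).Ctx) : ℝ :=
  ∑ t : (cycleScenario n hn).JO γ.1, (∏ x, sgn (t x)) * B γ t

/-- The `n`-cycle functional `I_a(B) = Σ_i a_i ⟨x_i x_{i+1}⟩`. -/
def Ifun {n : ℕ} (hn : 3 ≤ n) (a : Fin n → ℤ) (B : Behavior (cycleScenario n hn)) : ℝ :=
  ∑ i : Fin n, (a i : ℝ) * corrCtx B (cycCtxC hn i)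

/-- `a` is a `±1`-valued sign vector. -/
def IsSign {n : ℕ} (a : Fin n → ℤ) : Prop := ∀ i, a i = 1 ∨ a i = -1

/-- `a` has an odd number of entries equal to `-1`. -/
def IsOddSign {n : ℕ} (a : Fin n → ℤ) : Prop :=
  Odd (Finset.univ.filter fun i => a i = -1).card

theorem exists_edge {n : ℕ} {hn : 3 ≤ n} (γ : (cycleScenario n hn).Ctx) :
    ∃ i : Fin n, cycCtx i = γ.1 := by
  have h : γ.1 ∈ Finset.image (fun i : Fin n => cycCtx i) Finset.univ := γ.2
  obtain ⟨i, -, h2⟩ := Finset.mem_image.mp h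
  exact ⟨i, h2⟩

/-- The index `i` such that a maximal context is `{x_i, x_{i+1}}`. -/
def edgeOf {n : ℕ} (hn : 3 ≤ n) (γ : (cycleScenario n hn).Ctx) : Fin n :=
  (exists_edge γ).choose

/-- The behavior with prescribed two-point correlators `E i` and unbiased marginals:
`p_{γ_i}(s,t) = (1 + E i · s · t)/4`. -/
def corrBeh {n : ℕ} (hn : 3 ≤ n) (E : Fin n → ℝ) : Behavior (cycleScenario n hn) :=
  fun γ t => (1 + E (edgeOf hn γ) * ∏ x, sgn (t x)) / 4

/-- The strongly contextual nondisturbing vertex `B_a` with `p_{γ_i}(s,t) = (1 + a_i·s·t)/4`. -/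
def Ba {n : ℕ} (hn : 3 ≤ n) (a : Fin n → ℤ) : Behavior (cycleScenario n hn) :=
  corrBeh hn fun i => (a i : ℝ)

/-- The behavior `B_∅` with all outcomes equally likely. -/
def Bempty {n : ℕ} (hn : 3 ≤ n) : Behavior (cycleScenario n hn) :=
  corrBeh hn 0

/-- `B'_a = ((n-2)/n)·B_a + (2/n)·B_∅`. -/
def Ba' {n : ℕ} (hn : 3 ≤ n) (a : Fin n → ℤ) : Behavior (cycleScenario n hn) :=
  fun γ t => ((n : ℝ) - 2) / n * Ba hn a γ t + 2 / n * Bempty hn γ t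

/-- The element `ε·B_a + (1-ε)·B'_a` of the set `P_a`. -/
def Pbeh {n : ℕ} (hn : 3 ≤ n) (a : Fin n → ℤ) (ε : ℝ) : Behavior (cycleScenario n hn) :=
  fun γ t => ε * Ba hn a γ t + (1 - ε) * Ba' hn a γ t

/-- The family `B(α,ε) = α·B̃ + (1-α)·(ε·B_a + (1-ε)·B'_a)`, where `B̃` is the
deterministic noncontextual behavior induced by the global assignment `c`. -/
def Bae {n : ℕ} (hn : 3 ≤ n) (a : Fin n → ℤ) (c : (cycleScenario n hn).Glob) (α ε : ℝ) :
    Behavior (cycleScenario n hn) :=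
  fun γ t => α * detB _ c γ t + (1 - α) * Pbeh hn a ε γ t

/-- The yield monotone `y_a(B) = sup { I_a(B') : B' ∈ ND(Υ_n), B → B' }`. -/
def yieldM {n : ℕ} (hn : 3 ≤ n) (a : Fin n → ℤ) (B : Behavior (cycleScenario n hn)) : ℝ :=
  sSup {y : ℝ | ∃ B' : Behavior (cycleScenario n hn),
    IsProb _ B' ∧ IsND _ B' ∧ Arrow _ B B' ∧ y = Ifun hn a B'}

/-- The cost monotone `c_a(B) = inf { I_a(B') : B' ∈ P_a, B' → B } ∈ ℝ ∪ {+∞}`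
(with `inf ∅ = +∞`). -/
def costM {n : ℕ} (hn : 3 ≤ n) (a : Fin n → ℤ) (B : Behavior (cycleScenario n hn)) : EReal :=
  sInf {x : EReal | ∃ ε : ℝ, 0 ≤ ε ∧ ε ≤ 1 ∧ Arrow _ (Pbeh hn a ε) B ∧
    x = ((Ifun hn a (Pbeh hn a ε) : ℝ) : EReal)}

/-! A noncontextual behavior is a convex mixture of deterministic ones and `I_a` is linear, so it
suffices to bound `I_a` on a deterministic assignment `s ∈ {±1}^n`. There every term
`aᵢ sᵢ sᵢ₊₁` is `±1`, and around the cycle each `sᵢ` occurs twice, so the product of the terms is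
`∏ aᵢ = -1`; hence some term is `-1` and the sum is at most `(n - 1) - 1`. -/

theorem Finset.sum_le_card_sub_two {ι : Type*} [Fintype ι] {t : ι → ℝ} (ht : ∀ i, t i ≤ 1)
    {j : ι} (hj : t j = -1) : ∑ i, t i ≤ Fintype.card ι - 2 := by
  have h := Finset.single_le_sum (f := fun i => 1 - t i) (fun i _ => sub_nonneg.2 (ht i))
    (Finset.mem_univ j)
  simp only [Finset.sum_sub_distrib, Finset.sum_const, Finset.card_univ, nsmul_eq_mul,
    mul_one, hj] at h
  linarith

theorem Finset.prod_mul_comp_eq_one {ι R : Type*} [Fintype ι] [CommMonoid R] {f : ι → R}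
    (hf : ∀ i, f i * f i = 1) {σ : ι → ι} (hσ : σ.Bijective) :
    ∏ i, f i * f (σ i) = 1 := by
  rw [Finset.prod_mul_distrib, hσ.prod_comp f, ← Finset.prod_mul_distrib]
  exact Finset.prod_eq_one fun i _ => hf i

theorem sgn_mul_self (b : Bool) : sgn b * sgn b = 1 := by
  cases b <;> norm_num [sgn]

theorem sgn_eq_one_or_eq_neg_one (b : Bool) : sgn b = 1 ∨ sgn b = -1 := by
  cases b <;> simp [sgn]

theorem IsOddSign.prod_eq_neg_one {n : ℕ} {a : Fin n → ℤ} (ha : IsSign a)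
    (hodd : IsOddSign a) : ∏ i, (a i : ℝ) = -1 := by
  have h : ∀ i, (a i : ℝ) = if a i = -1 then -1 else 1 := fun i => by
    rcases ha i with h | h <;> simp [h]
  simp only [h, Finset.prod_ite, Finset.prod_const, one_pow, mul_one, hodd.neg_one_pow]

theorem cycSucc_bijective {n : ℕ} : (cycSucc (n := n)).Bijective :=
  Finite.injective_iff_bijective.mp fun i j h =>
    Fin.ext ((Nat.ModEq.add_right_cancel' 1 (congrArg Fin.val h)).eq_of_lt_of_lt i.2 j.2)

theorem corrCtx_detB {n : ℕ} (hn : 3 ≤ n) (c : (cycleScenario n hn).Glob) (i : Fin n) :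
    corrCtx (detB _ c) (cycCtxC hn i) = sgn (c i) * sgn (c (cycSucc i)) := by
  unfold corrCtx detB
  rw [Finset.sum_eq_single_of_mem _ (Finset.mem_univ ((cycleScenario n hn).restr _ c))
    fun t _ ht => by rw [if_neg (Ne.symm ht), mul_zero], if_pos rfl, mul_one]
  exact (Finset.prod_coe_sort (cycCtx i) fun x => sgn (c x)).trans
    (Finset.prod_pair (cycSucc_ne hn i))

theorem Ifun_detB_le {n : ℕ} (hn : 3 ≤ n) {a : Fin n → ℤ} (ha : IsSign a)
    (hodd : IsOddSign a) (c : (cycleScenario n hn).Glob) :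
    Ifun hn a (detB _ c) ≤ n - 2 := by
  set t : Fin n → ℝ := fun i => a i * (sgn (c i) * sgn (c (cycSucc i))) with ht
  have hI : Ifun hn a (detB _ c) = ∑ i, t i :=
    Finset.sum_congr rfl fun i _ => by rw [corrCtx_detB]
  have ht_pm : ∀ i, t i = 1 ∨ t i = -1 := fun i => by
    rcases ha i with h | h <;> rcases sgn_eq_one_or_eq_neg_one (c i) with h' | h' <;>
      rcases sgn_eq_one_or_eq_neg_one (c (cycSucc i)) with h'' | h'' <;>
      norm_num [ht, h, h', h'']
  have ht_prod : ∏ i, t i = -1 := by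
    rw [ht, Finset.prod_mul_distrib, hodd.prod_eq_neg_one ha,
      Finset.prod_mul_comp_eq_one (f := fun i : Fin n => sgn (c i)) (fun i => sgn_mul_self (c i))
        cycSucc_bijective, mul_one]
  obtain ⟨j, hj⟩ : ∃ j, t j ≠ 1 := by
    by_contra! h
    rw [Finset.prod_eq_one fun i _ => h i] at ht_prod
    norm_num at ht_prod
  have h := Finset.sum_le_card_sub_two (fun i => (ht_pm i).elim le_of_eq fun h => by linarith)
    ((ht_pm j).resolve_left hj)
  rw [hI]
  rwa [Fintype.card_fin] at h

theorem IsNC.eq_sum_mul_detB {S : Scenario} {B : Behavior S} (hB : IsNC S B) :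
    ∃ p : S.Glob → ℝ, (∀ o, 0 ≤ p o) ∧ ∑ o, p o = 1 ∧
      B = fun γ t => ∑ o, p o * detB S o γ t := by
  obtain ⟨p, hp0, hp1, hpB⟩ := hB
  refine ⟨p, hp0, hp1, funext₂ fun γ t => (hpB γ t).trans (Finset.sum_congr rfl fun o _ => ?_)⟩
  unfold detB
  split_ifs <;> simp

theorem corrCtx_sum_mul {n : ℕ} {hn : 3 ≤ n} {ι : Type*} [Fintype ι] (p : ι → ℝ)
    (D : ι → Behavior (cycleScenario n hn)) (γ : (cycleScenario n hn).Ctx) :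
    corrCtx (fun γ t => ∑ o, p o * D o γ t) γ = ∑ o, p o * corrCtx (D o) γ := by
  simp only [corrCtx, Finset.mul_sum]
  rw [Finset.sum_comm]
  exact Finset.sum_congr rfl fun _ _ => Finset.sum_congr rfl fun _ _ => by ring

theorem Ifun_sum_mul {n : ℕ} (hn : 3 ≤ n) (a : Fin n → ℤ) {ι : Type*} [Fintype ι] (p : ι → ℝ)
    (D : ι → Behavior (cycleScenario n hn)) :
    Ifun hn a (fun γ t => ∑ o, p o * D o γ t) = ∑ o, p o * Ifun hn a (D o) := by
  simp only [Ifun, corrCtx_sum_mul, Finset.mul_sum]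
  rw [Finset.sum_comm]
  exact Finset.sum_congr rfl fun _ _ => Finset.sum_congr rfl fun _ _ => by ring

/-- for every `n ≥ 3`, every odd sign vector `a ∈ {±1}^n` and every
noncontextual behavior `B` on the `n`-cycle scenario, `I_a(B) ≤ n - 2`. -/
theorem statement_3 (n : ℕ) (hn : 3 ≤ n) (a : Fin n → ℤ) (ha : IsSign a)
    (hodd : IsOddSign a) (B : Behavior (cycleScenario n hn)) (hB : IsNC _ B) :
    Ifun hn a B ≤ (n : ℝ) - 2 := by
  obtain ⟨p, hp0, hp1, rfl⟩ := hB.eq_sum_mul_detB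
  calc Ifun hn a (fun γ t => ∑ o, p o * detB _ o γ t)
      = ∑ o, p o * Ifun hn a (detB _ o) := Ifun_sum_mul hn a p _
    _ ≤ ∑ o, p o * ((n : ℝ) - 2) :=
      Finset.sum_le_sum fun o _ => mul_le_mul_of_nonneg_left (Ifun_detB_le hn ha hodd o) (hp0 o)
    _ = (n : ℝ) - 2 := by rw [← Finset.sum_mul, hp1, one_mul]
end
end

section
/- For every integer n ≥ 3 and every contextual nondisturbing behavior B on the n-cycle scenario (B ∈ ND(Υ_n) \ NC(Υ_n)), there exists exactly one odd sign vector a ∈ {−1, +1}^n such that I_a(B) > n − 2. -/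
noncomputable section

/-!
Uniqueness: two distinct odd sign vectors differ in an even, hence at least two, number of
positions. There the terms of `I_a + I_a'` cancel, and as all correlators lie in `[-1, 1]` the
other terms are at most `2`, so `I_a + I_a' ≤ 2 (n - 2)`.

Existence: a nondisturbing behavior satisfying every odd inequality `I_a ≤ n - 2` is
noncontextual. Each edge distribution is determined by the two vertex means and its correlator.
Cut the cycle along the chord from its second to last vertex to vertex `0`, leaving a triangle
and a cycle one vertex shorter. All constraints on the chord's correlator (its box is a
distribution, the triangle's four cycle inequalities, the shorter cycle's inequalities) are
lower or upper bounds, and each lower bound is below each upper bound, so a correlator can be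
chosen. The shorter cycle then has a joint distribution by induction, and the triangle has an
explicit one. They are glued along the chord by making the removed vertex conditionally
independent of the others given the chord's endpoints.
-/

open Finset

section Pushforward

variable {α β γ : Type*} [Fintype α] [DecidableEq β]

def pushforward (φ : α → β) (q : α → ℝ) (b : β) : ℝ :=
  ∑ a, if φ a = b then q a else 0

lemma pushforward_eq_sum_filter (φ : α → β) (q : α → ℝ) (b : β) :
    pushforward φ q b = ∑ a with φ a = b, q a :=
  (sum_filter _ _).symm

lemma pushforward_nonneg {φ : α → β} {q : α → ℝ} (hq : 0 ≤ q) : 0 ≤ pushforward φ q :=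
  fun b => by rw [pushforward_eq_sum_filter]; exact sum_nonneg fun a _ => hq a

lemma le_pushforward {φ : α → β} {q : α → ℝ} (hq : 0 ≤ q) (a : α) :
    q a ≤ pushforward φ q (φ a) := by
  rw [pushforward_eq_sum_filter]
  exact single_le_sum (fun a _ => hq a) (by simp)

lemma sum_pushforward [Fintype β] (φ : α → β) (q : α → ℝ) :
    ∑ b, pushforward φ q b = ∑ a, q a := by
  simp only [pushforward_eq_sum_filter]
  exact sum_fiberwise _ _ _

lemma pushforward_pushforward [Fintype β] [DecidableEq γ] (φ : α → β) (ψ : β → γ)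
    (q : α → ℝ) : pushforward ψ (pushforward φ q) = pushforward (ψ ∘ φ) q := by
  funext c
  simp only [pushforward_eq_sum_filter, sum_fiberwise_eq_sum_filter, mem_filter, mem_univ,
    true_and, Function.comp_apply]

lemma pushforward_apply_equiv [DecidableEq γ] (φ : α → β) (q : α → ℝ) (e : γ ≃ β) (c : γ) :
    pushforward φ q (e c) = pushforward (e.symm ∘ φ) q c := by
  simp only [pushforward, Function.comp_apply, ← Equiv.symm_apply_eq]

lemma pushforward_fst [Fintype β] [Fintype γ] (q : β × γ → ℝ) (b : β) :
    pushforward Prod.fst q b = ∑ c, q (b, c) := by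
  rw [pushforward, Fintype.sum_prod_type, sum_comm]
  simp

lemma pushforward_map_id [Fintype γ] [DecidableEq γ] (φ : α → β) (q : α × γ → ℝ) (b : β)
    (c : γ) : pushforward (Prod.map φ id) q (b, c) = pushforward φ (fun a => q (a, c)) b := by
  simp only [pushforward, Fintype.sum_prod_type, Prod.map, id, Prod.mk.injEq, ite_and]
  exact sum_congr rfl fun a _ => by split_ifs <;> simp

/-- Gluing along a common marginal: `q (a, c) = p a * r (key a, c) / μ (key a)`, where `μ` is
the common marginal. Where `μ` vanishes so do `p` and `r`, and `x / 0 = 0` gives the right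
value. -/
theorem exists_glue [DecidableEq α] [Fintype β] [Fintype γ] [DecidableEq γ] {p : α → ℝ}
    {r : β × γ → ℝ} (key : α → β) (hp : 0 ≤ p) (hr : 0 ≤ r)
    (h : pushforward key p = pushforward Prod.fst r) :
    ∃ q : α × γ → ℝ, 0 ≤ q ∧ pushforward Prod.fst q = p ∧ pushforward (Prod.map key id) q = r := by
  set μ := pushforward key p
  have hμ : ∀ b, ∑ c, r (b, c) = μ b := fun b => by rw [h, pushforward_fst]
  refine ⟨fun x => p x.1 * r (key x.1, x.2) / μ (key x.1), fun x => ?_, ?_, ?_⟩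
  · exact div_nonneg (mul_nonneg (hp _) (hr _)) (pushforward_nonneg hp _)
  · funext a
    rw [pushforward_fst]
    simp only [← sum_div, ← mul_sum, hμ]
    rcases eq_or_ne (μ (key a)) 0 with h0 | h0
    · have hle : p a ≤ μ (key a) := le_pushforward hp a
      rw [h0] at hle
      rw [h0, div_zero]
      exact le_antisymm (hp a) hle
    · field_simp
  · funext ⟨b, c⟩
    have hfib : pushforward key (fun a => p a * r (key a, c) / μ (key a)) b
        = μ b * r (b, c) / μ b := by
      simp only [pushforward_eq_sum_filter, μ, sum_div, sum_mul]
      exact sum_congr rfl fun a ha => by rw [(mem_filter.mp ha).2]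
    rw [pushforward_map_id, hfib]
    rcases eq_or_ne (μ b) 0 with h0 | h0
    · have hle : r (b, c) ≤ μ b := by
        rw [h, pushforward_fst]
        exact single_le_sum (fun c _ => hr (b, c)) (mem_univ c)
      rw [h0, zero_mul, zero_div]
      exact le_antisymm (hr _) (h0 ▸ hle)
    · field_simp

end Pushforward

section Signs

variable {ι : Type*}

def IsPMOne (s : ι → ℝ) : Prop := ∀ i, s i = 1 ∨ s i = -1

namespace IsPMOne

variable {s s' : ι → ℝ}

lemma prod_eq_one_or (hs : IsPMOne s) (S : Finset ι) :
    ∏ i ∈ S, s i = 1 ∨ ∏ i ∈ S, s i = -1 :=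
  prod_induction _ (fun x => x = 1 ∨ x = -1)
    (fun a b ha hb => by rcases ha with rfl | rfl <;> rcases hb with rfl | rfl <;> norm_num)
    (Or.inl rfl) fun i _ => hs i

lemma prod_eq_neg_one_pow (hs : IsPMOne s) (S : Finset ι) :
    ∏ i ∈ S, s i = (-1) ^ #{i ∈ S | s i = -1} := by
  rw [← prod_filter_mul_prod_filter_not S (fun i => s i = -1), prod_congr rfl
    (fun i hi => (mem_filter.mp hi).2), prod_const, prod_eq_one fun i hi => ?_, mul_one]
  exact (hs i).resolve_right (mem_filter.mp hi).2

lemma sum_mul_add_sum_mul_le (hs : IsPMOne s) (hs' : IsPMOne s') {E : ι → ℝ} (S : Finset ι)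
    (hE : ∀ i ∈ S, |E i| ≤ 1) :
    ∑ i ∈ S, s i * E i + ∑ i ∈ S, s' i * E i ≤ 2 * #{i ∈ S | s i = s' i} := by
  rw [← sum_add_distrib, card_filter, Nat.cast_sum, mul_sum]
  refine sum_le_sum fun i hi => ?_
  have := abs_le.mp (hE i hi)
  rcases hs i with h | h <;> rcases hs' i with h' | h' <;> norm_num [h, h'] <;> linarith

end IsPMOne

end Signs

section Boxes

/-- The distribution of two `±1`-valued outcomes with means `x`, `y` and correlator `e`. -/
def pairDist (x y e : ℝ) (ab : Bool × Bool) : ℝ :=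
  (1 + sgn ab.1 * x + sgn ab.2 * y + sgn ab.1 * sgn ab.2 * e) / 4

def corrIcc (x y : ℝ) : Set ℝ := Set.Icc (|x + y| - 1) (1 - |x - y|)

variable {x y z e e₁ e₂ : ℝ}

lemma mem_corrIcc_iff : e ∈ corrIcc x y ↔
    0 ≤ 1 + x + y + e ∧ 0 ≤ 1 - x - y + e ∧ 0 ≤ 1 + x - y - e ∧ 0 ≤ 1 - x + y - e := by
  rw [corrIcc, Set.mem_Icc, sub_le_iff_le_add, le_sub_comm, abs_le, abs_le]
  constructor
  · rintro ⟨⟨h1, h2⟩, h3, h4⟩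
    refine ⟨?_, ?_, ?_, ?_⟩ <;> linarith
  · rintro ⟨h1, h2, h3, h4⟩
    refine ⟨⟨?_, ?_⟩, ?_, ?_⟩ <;> linarith

lemma pairDist_nonneg_iff : 0 ≤ pairDist x y e ↔ e ∈ corrIcc x y := by
  rw [mem_corrIcc_iff, Pi.le_def, Prod.forall, Bool.forall_bool, Bool.forall_bool,
    Bool.forall_bool]
  simp only [pairDist, sgn, Pi.zero_apply, if_true, Bool.false_eq_true, if_false]
  constructor
  · rintro ⟨⟨h1, h2⟩, h3, h4⟩
    refine ⟨?_, ?_, ?_, ?_⟩ <;> linarith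
  · rintro ⟨h1, h2, h3, h4⟩
    refine ⟨⟨?_, ?_⟩, ?_, ?_⟩ <;> linarith

lemma abs_le_one_of_mem_corrIcc (h : e ∈ corrIcc x y) : |x| ≤ 1 ∧ |y| ≤ 1 ∧ |e| ≤ 1 := by
  obtain ⟨h1, h2, h3, h4⟩ := mem_corrIcc_iff.mp h
  simp only [abs_le]
  refine ⟨⟨?_, ?_⟩, ⟨?_, ?_⟩, ⟨?_, ?_⟩⟩ <;> linarith

lemma abs_sub_mul_le_of_mem_corrIcc (h : e ∈ corrIcc x y) {s : ℝ} (hs : s = 1 ∨ s = -1) :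
    |x - s * y| ≤ 1 - s * e := by
  rcases hs with rfl | rfl
  · have := h.2
    simp only [one_mul]
    linarith
  · have := h.1
    simp only [neg_mul, one_mul, sub_neg_eq_add]
    linarith

lemma corrIcc_lower_le_upper (hx : |x| ≤ 1) (hy : |y| ≤ 1) : |x + y| - 1 ≤ 1 - |x - y| := by
  rw [abs_le] at hx hy
  rcases abs_cases (x + y) with ⟨h, _⟩ | ⟨h, _⟩ <;>
    rcases abs_cases (x - y) with ⟨h', _⟩ | ⟨h', _⟩ <;> linarith

lemma abs_add_abs_le_two_of_mem_corrIcc (h₁ : e₁ ∈ corrIcc x y) (h₂ : e₂ ∈ corrIcc y z) :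
    |x - z| + |e₁ + e₂| ≤ 2 ∧ |x + z| + |e₁ - e₂| ≤ 2 := by
  obtain ⟨a1, a2, a3, a4⟩ := mem_corrIcc_iff.mp h₁
  obtain ⟨b1, b2, b3, b4⟩ := mem_corrIcc_iff.mp h₂
  constructor
  · rcases abs_cases (x - z) with ⟨h, _⟩ | ⟨h, _⟩ <;>
      rcases abs_cases (e₁ + e₂) with ⟨h', _⟩ | ⟨h', _⟩ <;> linarith
  · rcases abs_cases (x + z) with ⟨h, _⟩ | ⟨h, _⟩ <;>
      rcases abs_cases (e₁ - e₂) with ⟨h', _⟩ | ⟨h', _⟩ <;> linarith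

def mean₁ (p : Bool × Bool → ℝ) : ℝ := ∑ ab, sgn ab.1 * p ab

def mean₂ (p : Bool × Bool → ℝ) : ℝ := ∑ ab, sgn ab.2 * p ab

def correlator (p : Bool × Bool → ℝ) : ℝ := ∑ ab, sgn ab.1 * sgn ab.2 * p ab

lemma eq_pairDist {p : Bool × Bool → ℝ} (h : ∑ ab, p ab = 1) :
    p = pairDist (mean₁ p) (mean₂ p) (correlator p) := by
  simp only [Fintype.sum_prod_type, Fintype.sum_bool] at h
  funext ⟨a, b⟩
  cases a <;> cases b <;>
    simp [pairDist, mean₁, mean₂, correlator, sgn, Fintype.sum_prod_type] <;> linarith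

lemma correlator_mem_corrIcc {p : Bool × Bool → ℝ} (hp : 0 ≤ p) (h : ∑ ab, p ab = 1) :
    correlator p ∈ corrIcc (mean₁ p) (mean₂ p) :=
  pairDist_nonneg_iff.mp (eq_pairDist h ▸ hp)

lemma mean₂_eq_mean₁ {p p' : Bool × Bool → ℝ}
    (h : pushforward Prod.snd p = pushforward Prod.fst p') : mean₂ p = mean₁ p' := by
  have h₁ := congrFun h true
  have h₂ := congrFun h false
  simp only [pushforward, Fintype.sum_prod_type, Fintype.sum_bool] at h₁ h₂
  simp only [mean₁, mean₂, Fintype.sum_prod_type, Fintype.sum_bool, sgn]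
  norm_num at h₁ h₂ ⊢
  linarith

end Boxes

section Triangle

variable {x y z exy eyz exz : ℝ}

/-- `htri` states the four odd cycle inequalities of the triangle. The outcomes
`w = ((a, c), b)` of the joint are those of `x`, `z`, `y`, so that `Prod.fst` is the edge along
which it is glued in `exists_cycle_joint`. -/
theorem exists_triangle_joint (hxy : exy ∈ corrIcc x y) (hyz : eyz ∈ corrIcc y z)
    (hxz : exz ∈ corrIcc x z) (htri : exz ∈ corrIcc exy eyz) :
    ∃ r : (Bool × Bool) × Bool → ℝ, 0 ≤ r ∧ pushforward Prod.fst r = pairDist x z exz ∧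
      pushforward (fun w => (w.1.1, w.2)) r = pairDist x y exy ∧
      pushforward (fun w => (w.2, w.1.2)) r = pairDist y z eyz := by
  obtain ⟨a1, a2, a3, a4⟩ := mem_corrIcc_iff.mp hxy
  obtain ⟨b1, b2, b3, b4⟩ := mem_corrIcc_iff.mp hyz
  obtain ⟨c1, c2, c3, c4⟩ := mem_corrIcc_iff.mp hxz
  obtain ⟨d1, d2, d3, d4⟩ := mem_corrIcc_iff.mp htri
  -- `F` is the three-point correlator, constrained only by positivity of the joint.
  set F := max (max (-(1 + x + y + z + exy + eyz + exz)) (-(1 + x - y - z - exy + eyz - exz)))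
    (max (-(1 - x + y - z - exy - eyz + exz)) (-(1 - x - y + z + exy - eyz - exz)))
  have hF₁ : -(1 + x + y + z + exy + eyz + exz) ≤ F := le_max_of_le_left (le_max_left _ _)
  have hF₂ : -(1 + x - y - z - exy + eyz - exz) ≤ F := le_max_of_le_left (le_max_right _ _)
  have hF₃ : -(1 - x + y - z - exy - eyz + exz) ≤ F := le_max_of_le_right (le_max_left _ _)
  have hF₄ : -(1 - x - y + z + exy - eyz - exz) ≤ F := le_max_of_le_right (le_max_right _ _)
  have hF₅ : F ≤ 1 - x - y - z + exy + eyz + exz :=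
    max_le (max_le (by linarith) (by linarith)) (max_le (by linarith) (by linarith))
  have hF₆ : F ≤ 1 - x + y + z - exy + eyz - exz :=
    max_le (max_le (by linarith) (by linarith)) (max_le (by linarith) (by linarith))
  have hF₇ : F ≤ 1 + x - y + z - exy - eyz + exz :=
    max_le (max_le (by linarith) (by linarith)) (max_le (by linarith) (by linarith))
  have hF₈ : F ≤ 1 + x + y - z + exy - eyz - exz :=
    max_le (max_le (by linarith) (by linarith)) (max_le (by linarith) (by linarith))
  refine ⟨fun w => (1 + sgn w.1.1 * x + sgn w.2 * y + sgn w.1.2 * z + sgn w.1.1 * sgn w.2 * exy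
    + sgn w.2 * sgn w.1.2 * eyz + sgn w.1.1 * sgn w.1.2 * exz
    + sgn w.1.1 * sgn w.2 * sgn w.1.2 * F) / 8, ?_, ?_, ?_, ?_⟩
  · rintro ⟨⟨a, c⟩, b⟩
    cases a <;> cases b <;> cases c <;> simp only [sgn] <;> norm_num <;> linarith
  all_goals
    funext ⟨a, b⟩
    cases a <;> cases b <;>
      simp [pushforward, pairDist, sgn, Fintype.sum_prod_type] <;> ring

end Triangle

section CycleMarginal

/-- Bits are indexed by `ℕ`, with the junk value `false` from `k` on, so that cycles of
different lengths can share their vertex data. -/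
def bitAt {k : ℕ} (f : Fin k → Bool) (i : ℕ) : Bool := if h : i < k then f ⟨i, h⟩ else false

def pairAt {k : ℕ} (i j : ℕ) (f : Fin k → Bool) : Bool × Bool := (bitAt f i, bitAt f j)

lemma bitAt_val {k : ℕ} (f : Fin k → Bool) (i : Fin k) : bitAt f i = f i := dif_pos i.2

lemma bitAt_snoc_of_lt {k : ℕ} (g : Fin k → Bool) (v : Bool) {i : ℕ} (h : i < k) :
    bitAt (Fin.snoc g v : Fin (k + 1) → Bool) i = bitAt g i := by
  simp only [bitAt, h, Nat.lt_succ_of_lt h, dite_true]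
  exact Fin.snoc_castSucc (α := fun _ => Bool) (i := ⟨i, h⟩) ..

lemma bitAt_snoc_self {k : ℕ} (g : Fin k → Bool) (v : Bool) :
    bitAt (Fin.snoc g v : Fin (k + 1) → Bool) k = v := by
  simp only [bitAt, Nat.lt_succ_self, dite_true]
  exact Fin.snoc_last (α := fun _ => Bool) ..

/-- The odd cycle inequalities of the cycle on the vertices `0, …, N`, whose edge `i < N` joins
`i` to `i + 1` and has correlator `E i`, and whose closing edge joins `N` to `0` and has
correlator `c`; `s` runs over the edge sign vectors with an odd number of `-1`'s. -/
def CycleIneqs (N : ℕ) (E : ℕ → ℝ) (c : ℝ) : Prop :=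
  ∀ s : ℕ → ℝ, IsPMOne s → ∏ i ∈ range (N + 1), s i = -1 →
    ∑ i ∈ range N, s i * E i + s N * c ≤ N - 1

variable {N : ℕ} {m E s s' : ℕ → ℝ} {c d : ℝ}

lemma abs_sub_prod_mul_le (hs : IsPMOne s) (hpath : ∀ i < N, E i ∈ corrIcc (m i) (m (i + 1))) :
    |m 0 - (∏ i ∈ range N, s i) * m N| ≤ N - ∑ i ∈ range N, s i * E i := by
  induction N with
  | zero => simp
  | succ N ih =>
    have hstep := abs_sub_mul_le_of_mem_corrIcc (hpath N (by omega)) (hs N)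
    have hπ : |∏ i ∈ range N, s i| = 1 := by
      rcases hs.prod_eq_one_or (range N) with h | h <;> simp [h]
    calc |m 0 - (∏ i ∈ range (N + 1), s i) * m (N + 1)|
        = |(m 0 - (∏ i ∈ range N, s i) * m N)
          + (∏ i ∈ range N, s i) * (m N - s N * m (N + 1))| := by
          rw [prod_range_succ]
          ring_nf
      _ ≤ |m 0 - (∏ i ∈ range N, s i) * m N|
          + |(∏ i ∈ range N, s i) * (m N - s N * m (N + 1))| := abs_add_le _ _
      _ ≤ (N - ∑ i ∈ range N, s i * E i) + (1 - s N * E N) := by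
          rw [abs_mul, hπ, one_mul]
          exact add_le_add (ih fun i hi => hpath i (by omega)) hstep
      _ = (N + 1 : ℕ) - ∑ i ∈ range (N + 1), s i * E i := by
          rw [sum_range_succ]
          push_cast
          ring

lemma sum_add_abs_le_of_cycleIneqs (hcyc : CycleIneqs (N + 1) E c) (hs : IsPMOne s) :
    ∑ i ∈ range N, s i * E i + |E N - (∏ i ∈ range N, s i) * c| ≤ N := by
  set π := ∏ i ∈ range N, s i
  set t : ℝ := if 0 ≤ E N - π * c then 1 else -1
  have ht : t * (E N - π * c) = |E N - π * c| := by
    simp only [t]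
    split_ifs with h
    · rw [one_mul, abs_of_nonneg h]
    · rw [neg_one_mul, abs_of_neg (not_le.mp h)]
  have hπ : π * π = 1 := by rcases hs.prod_eq_one_or (range N) with h | h <;> simp [π, h]
  have htt : t * t = 1 := by simp only [t]; split_ifs <;> norm_num
  -- extend `s` by the signs `t` and `-π t` of the two edges at the vertex `N + 1`
  set s' : ℕ → ℝ := fun i => if i < N then s i else if i = N then t else -π * t
  have hs' : IsPMOne s' := by
    intro i
    simp only [s']
    split_ifs
    · exact hs i
    · simp only [t]; split_ifs <;> simp
    · rcases hs.prod_eq_one_or (range N) with h | h <;> simp only [π, h, t] <;> split_ifs <;>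
        norm_num
  have hlow : ∀ i ∈ range N, s' i = s i := fun i hi => if_pos (mem_range.mp hi)
  have hprod : ∏ i ∈ range (N + 1 + 1), s' i = -1 := by
    rw [prod_range_succ, prod_range_succ, prod_congr rfl hlow]
    simp only [s', lt_irrefl, if_true, if_false, show ¬ N + 1 < N by omega,
      show N + 1 ≠ N by omega]
    linear_combination (-(t * t)) * hπ - htt
  have h := hcyc s' hs' hprod
  rw [sum_range_succ, sum_congr rfl fun i hi => by rw [hlow i hi]] at h
  simp only [s', lt_irrefl, if_true, if_false, show ¬ N + 1 < N by omega,
    show N + 1 ≠ N by omega] at h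
  push_cast at h
  rw [← ht]
  linarith

lemma sum_mul_add_sum_mul_le_of_prod_ne (hs : IsPMOne s) (hs' : IsPMOne s')
    (hE : ∀ i < N, |E i| ≤ 1) (hne : ∏ i ∈ range N, s i ≠ ∏ i ∈ range N, s' i) :
    ∑ i ∈ range N, s i * E i + ∑ i ∈ range N, s' i * E i ≤ 2 * (N - 1) := by
  have hlt : #{i ∈ range N | s i = s' i} < N := by
    refine (card_lt_card (filter_ssubset.mpr ?_)).trans_eq (card_range N)
    by_contra! h
    exact hne (prod_congr rfl h)
  have hcard : (#{i ∈ range N | s i = s' i} : ℝ) ≤ N - 1 := by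
    rw [le_sub_iff_add_le]
    exact_mod_cast hlt
  linarith [hs.sum_mul_add_sum_mul_le hs' (range N) fun i hi => hE i (mem_range.mp hi)]

lemma cycleIneqs_of_bounds
    (hlow : ∀ s, IsPMOne s → ∏ i ∈ range N, s i = 1 → ∑ i ∈ range N, s i * E i - (N - 1) ≤ d)
    (hup : ∀ s, IsPMOne s → ∏ i ∈ range N, s i = -1 → d ≤ (N - 1) - ∑ i ∈ range N, s i * E i) :
    CycleIneqs N E d := by
  intro s hs hodd
  rw [prod_range_succ] at hodd
  rcases hs.prod_eq_one_or (range N) with hπ | hπ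
  · have hsN : s N = -1 := by rw [hπ, one_mul] at hodd; exact hodd
    rw [hsN]
    linarith [hlow s hs hπ]
  · have hsN : s N = 1 := by rw [hπ] at hodd; linarith
    rw [hsN]
    linarith [hup s hs hπ]

theorem exists_chord (hpath : ∀ i < N + 1, E i ∈ corrIcc (m i) (m (i + 1)))
    (hclose : c ∈ corrIcc (m (N + 1)) (m 0)) (hcyc : CycleIneqs (N + 1) E c) :
    ∃ d, d ∈ corrIcc (m N) (m 0) ∧ d ∈ corrIcc (E N) c ∧ CycleIneqs N E d := by
  obtain ⟨hmN, -, hEN⟩ := abs_le_one_of_mem_corrIcc (hpath N (by omega))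
  obtain ⟨-, hm0, hc⟩ := abs_le_one_of_mem_corrIcc hclose
  obtain ⟨hsub, hadd⟩ := abs_add_abs_le_two_of_mem_corrIcc (hpath N (by omega)) hclose
  have hpath' : ∀ i < N, E i ∈ corrIcc (m i) (m (i + 1)) := fun i hi => hpath i (by omega)
  have hE : ∀ i < N, |E i| ≤ 1 := fun i hi => (abs_le_one_of_mem_corrIcc (hpath' i hi)).2.2
  let S : Set ℝ := {l | l = |m N + m 0| - 1 ∨ l = |E N + c| - 1 ∨
    ∃ s, IsPMOne s ∧ ∏ i ∈ range N, s i = 1 ∧ l = ∑ i ∈ range N, s i * E i - (N - 1)}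
  let T : Set ℝ := {u | u = 1 - |m N - m 0| ∨ u = 1 - |E N - c| ∨
    ∃ s, IsPMOne s ∧ ∏ i ∈ range N, s i = -1 ∧ u = (N - 1) - ∑ i ∈ range N, s i * E i}
  have hST : ∀ l ∈ S, ∀ u ∈ T, l ≤ u := by
    rintro l (rfl | rfl | ⟨s, hs, hπ, rfl⟩) u (rfl | rfl | ⟨s', hs', hπ', rfl⟩)
    · exact corrIcc_lower_le_upper hmN hm0
    · linarith
    · have := abs_sub_prod_mul_le hs' hpath'
      rw [hπ', neg_one_mul, sub_neg_eq_add, add_comm] at this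
      linarith
    · linarith
    · exact corrIcc_lower_le_upper hEN hc
    · have := sum_add_abs_le_of_cycleIneqs hcyc hs'
      rw [hπ', neg_one_mul, sub_neg_eq_add] at this
      linarith
    · have := abs_sub_prod_mul_le hs hpath'
      rw [hπ, one_mul, abs_sub_comm] at this
      linarith
    · have := sum_add_abs_le_of_cycleIneqs hcyc hs
      rw [hπ, one_mul] at this
      linarith
    · have := sum_mul_add_sum_mul_le_of_prod_ne hs hs' hE (by rw [hπ, hπ']; norm_num)
      linarith
  obtain ⟨d, hdS, hdT⟩ := exists_between_of_forall_le (s := S) (t := T) ⟨_, Or.inl rfl⟩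
    ⟨_, Or.inl rfl⟩ hST
  exact ⟨d, ⟨hdS (Or.inl rfl), hdT (Or.inl rfl)⟩,
    ⟨hdS (Or.inr (Or.inl rfl)), hdT (Or.inr (Or.inl rfl))⟩,
    cycleIneqs_of_bounds (fun s hs hπ => hdS (Or.inr (Or.inr ⟨s, hs, hπ, rfl⟩)))
      (fun s hs hπ => hdT (Or.inr (Or.inr ⟨s, hs, hπ, rfl⟩)))⟩

/-- A single vertex whose closing edge is a loop; the cycle inequality forces its correlator to
be `1`. -/
lemma exists_cycle_joint_zero (hclose : c ∈ corrIcc (m 0) (m 0))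
    (hcyc : CycleIneqs 0 E c) :
    ∃ q : (Fin 1 → Bool) → ℝ, 0 ≤ q ∧ ∑ f, q f = 1 ∧
      pushforward (pairAt 0 0) q = pairDist (m 0) (m 0) c := by
  have hc : c = 1 := by
    have := hcyc (fun _ => -1) (fun _ => Or.inr rfl) (by simp)
    simp only [range_zero, sum_empty, CharP.cast_eq_zero, zero_sub, neg_one_mul] at this
    linarith [(abs_le.mp (abs_le_one_of_mem_corrIcc hclose).2.2).2]
  have hm := abs_le.mp (abs_le_one_of_mem_corrIcc hclose).1
  refine ⟨pushforward (fun b _ => b) fun b => (1 + sgn b * m 0) / 2,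
    pushforward_nonneg fun b => ?_, ?_, ?_⟩
  · cases b <;> simp only [sgn, Pi.zero_apply] <;> norm_num <;> linarith
  · rw [sum_pushforward]
    simp [sgn]
    ring
  · rw [pushforward_pushforward]
    funext ⟨a, b⟩
    cases a <;> cases b <;> simp [pushforward, pairAt, bitAt, pairDist, sgn, hc] <;> ring

theorem exists_cycle_joint (hpath : ∀ i < N, E i ∈ corrIcc (m i) (m (i + 1)))
    (hclose : c ∈ corrIcc (m N) (m 0)) (hcyc : CycleIneqs N E c) :
    ∃ q : (Fin (N + 1) → Bool) → ℝ, 0 ≤ q ∧ ∑ f, q f = 1 ∧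
      (∀ i < N, pushforward (pairAt i (i + 1)) q = pairDist (m i) (m (i + 1)) (E i)) ∧
      pushforward (pairAt N 0) q = pairDist (m N) (m 0) c := by
  induction N generalizing c with
  | zero =>
    obtain ⟨q, hq0, hq1, hqclose⟩ := exists_cycle_joint_zero hclose hcyc
    exact ⟨q, hq0, hq1, fun i hi => absurd hi (Nat.not_lt_zero i), hqclose⟩
  | succ N ih =>
    obtain ⟨d, hdbox, hdtri, hdcyc⟩ := exists_chord hpath hclose hcyc
    obtain ⟨q', hq'0, hq'1, hq'path, hq'close⟩ := ih (fun i hi => hpath i (by omega)) hdbox hdcyc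
    obtain ⟨r, hr0, hrchord, hredge, hrclose⟩ :=
      exists_triangle_joint (hpath N (by omega)) hclose hdbox hdtri
    obtain ⟨q, hq0, hqfst, hqkey⟩ :=
      exists_glue (pairAt N 0) hq'0 hr0 (hq'close.trans hrchord.symm)
    let snoc : (Fin (N + 1) → Bool) × Bool → (Fin (N + 1 + 1) → Bool) := fun w => Fin.snoc w.1 w.2
    refine ⟨pushforward snoc q, pushforward_nonneg hq0, ?_, fun i hi => ?_, ?_⟩
    · rw [sum_pushforward, ← sum_pushforward Prod.fst, hqfst, hq'1]
    · rw [pushforward_pushforward]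
      rcases Nat.lt_succ_iff_lt_or_eq.mp hi with hi | rfl
      · have : pairAt i (i + 1) ∘ snoc = pairAt i (i + 1) ∘ Prod.fst := funext fun w => by
          simp [snoc, pairAt, bitAt_snoc_of_lt _ _ (hi.trans (Nat.lt_succ_self N)),
            bitAt_snoc_of_lt _ _ (Nat.succ_lt_succ hi)]
        rw [this, ← pushforward_pushforward, hqfst, hq'path i hi]
      · have : pairAt i (i + 1) ∘ snoc = (fun w => (w.1.1, w.2)) ∘ Prod.map (pairAt i 0) id :=
          funext fun w => by
            simp [snoc, pairAt, bitAt_snoc_of_lt _ _ (Nat.lt_succ_self i), bitAt_snoc_self]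
        rw [this, ← pushforward_pushforward, hqkey, hredge]
    · have : pairAt (N + 1) 0 ∘ snoc = (fun w => (w.2, w.1.2)) ∘ Prod.map (pairAt N 0) id :=
        funext fun w => by
          simp [snoc, pairAt, bitAt_snoc_of_lt _ _ (Nat.succ_pos N), bitAt_snoc_self]
      rw [pushforward_pushforward, this, ← pushforward_pushforward, hqkey, hrclose]

end CycleMarginal

section CycleScenario

variable {n : ℕ}

lemma mem_cycCtx_self (i : Fin n) : i ∈ cycCtx i := mem_insert_self _ _

lemma cycSucc_mem_cycCtx (i : Fin n) : cycSucc i ∈ cycCtx i := by simp [cycCtx]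

lemma cycSucc_cycSucc_ne (hn : 3 ≤ n) (i : Fin n) : cycSucc (cycSucc i) ≠ i := by
  intro h
  have hval : ((i.1 + 1) % n + 1) % n = i.1 := congrArg Fin.val h
  have hi := i.2
  rcases Nat.lt_or_ge (i.1 + 1) n with h1 | h1
  · rw [Nat.mod_eq_of_lt h1] at hval
    rcases Nat.lt_or_ge (i.1 + 1 + 1) n with h2 | h2
    · rw [Nat.mod_eq_of_lt h2] at hval
      omega
    · rw [show i.1 + 1 + 1 = n by omega, Nat.mod_self] at hval
      omega
  · rw [show i.1 + 1 = n by omega, Nat.mod_self, Nat.mod_eq_of_lt (by omega)] at hval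
    omega

lemma mem_cycCtx_inter_cycSucc (hn : 3 ≤ n) {i x : Fin n} :
    x ∈ cycCtx i ∩ cycCtx (cycSucc i) ↔ x = cycSucc i := by
  simp only [cycCtx, mem_inter, mem_insert, mem_singleton]
  constructor
  · rintro ⟨rfl | rfl, h | h⟩
    · exact absurd h (cycSucc_ne hn x)
    · exact absurd h.symm (cycSucc_cycSucc_ne hn x)
    · rfl
    · rfl
  · rintro rfl
    exact ⟨Or.inr rfl, Or.inl rfl⟩

variable (hn : 3 ≤ n)

def pairEquiv (i : Fin n) : Bool × Bool ≃ (cycleScenario n hn).JO (cycCtxC hn i).1 where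
  -- `x.1` has to be seen as an element of `Fin n` for `x.1 = i` to be decidable
  toFun ab x := @ite _ (@Eq (Fin n) x.1 i) (instDecidableEqFin n _ _) ab.1 ab.2
  invFun t := (t ⟨i, mem_cycCtx_self i⟩, t ⟨cycSucc i, cycSucc_mem_cycCtx i⟩)
  left_inv ab := by simp [(cycSucc_ne hn i).symm]
  right_inv t := by
    funext ⟨x, hx⟩
    rcases mem_insert.mp hx with rfl | hx
    · exact if_pos rfl
    · obtain rfl := mem_singleton.mp hx
      simp [(cycSucc_ne hn i).symm]

lemma pairEquiv_apply_cycSucc (i : Fin n) (ab : Bool × Bool) :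
    pairEquiv hn i ab ⟨cycSucc i, cycSucc_mem_cycCtx i⟩ = ab.2 :=
  if_neg (cycSucc_ne hn i).symm

lemma prod_sgn_pairEquiv (i : Fin n) (ab : Bool × Bool) :
    ∏ x, sgn (pairEquiv hn i ab x) = sgn ab.1 * sgn ab.2 := by
  refine (prod_coe_sort (cycCtx i) fun x => sgn (if x = i then ab.1 else ab.2)).trans ?_
  rw [cycCtx, prod_pair (cycSucc_ne hn i), if_pos rfl, if_neg (cycSucc_ne hn i).symm]

variable {hn}

def edgeDist (B : Behavior (cycleScenario n hn)) (i : Fin n) : Bool × Bool → ℝ :=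
  B (cycCtxC hn i) ∘ pairEquiv hn i

variable {B : Behavior (cycleScenario n hn)}

lemma edgeDist_nonneg (hB : IsProb _ B) (i : Fin n) : 0 ≤ edgeDist B i :=
  fun _ => (hB _).1 _

lemma sum_edgeDist (hB : IsProb _ B) (i : Fin n) : ∑ ab, edgeDist B i ab = 1 :=
  ((pairEquiv hn i).sum_comp _).trans (hB _).2

lemma corrCtx_eq_correlator (i : Fin n) :
    corrCtx B (cycCtxC hn i) = correlator (edgeDist B i) := by
  rw [corrCtx, ← (pairEquiv hn i).sum_comp]
  simp only [prod_sgn_pairEquiv, correlator, edgeDist, Function.comp_apply]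

lemma pushforward_snd_edgeDist (hND : IsND _ B) (i : Fin n) :
    pushforward Prod.snd (edgeDist B i) = pushforward Prod.fst (edgeDist B (cycSucc i)) := by
  funext c
  have hmem : cycSucc i ∈ (cycCtxC hn i).1 ∩ (cycCtxC hn (cycSucc i)).1 :=
    (mem_cycCtx_inter_cycSucc hn).mpr rfl
  -- a joint outcome on `γ_i ∩ γ_{i+1} = {x_{i+1}}` is a single bit
  have hconst : ∀ (d : Bool) (X : ℝ), (if ((fun _ => d) :
      (cycleScenario n hn).JO ((cycCtxC hn i).1 ∩ (cycCtxC hn (cycSucc i)).1)) = (fun _ => c)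
        then X else 0) = if d = c then X else 0 :=
    fun d X => if_congr ⟨fun h => congrFun h ⟨cycSucc i, hmem⟩, fun h => h ▸ rfl⟩ rfl rfl
  have hleft : ∀ ab, (cycleScenario n hn).restr2
      (inter_subset_left (s₂ := (cycCtxC hn (cycSucc i)).1)) (pairEquiv hn i ab) =
        fun _ => ab.2 := by
    intro ab
    funext ⟨x, hx⟩
    obtain rfl := (mem_cycCtx_inter_cycSucc hn).mp hx
    exact pairEquiv_apply_cycSucc hn i ab
  have hright : ∀ ab, (cycleScenario n hn).restr2
      (inter_subset_right (s₁ := (cycCtxC hn i).1)) (pairEquiv hn (cycSucc i) ab) =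
        fun _ => ab.1 := by
    intro ab
    funext ⟨x, hx⟩
    obtain rfl := (mem_cycCtx_inter_cycSucc hn).mp hx
    exact if_pos rfl
  have h := hND (cycCtxC hn i) (cycCtxC hn (cycSucc i)) fun _ => c
  rw [← (pairEquiv hn i).sum_comp, ← (pairEquiv hn (cycSucc i)).sum_comp] at h
  refine (sum_congr rfl fun ab _ => ?_).trans (h.trans (sum_congr rfl fun ab _ => ?_))
  · rw [hleft ab]
    exact (hconst _ _).symm
  · rw [hright ab]
    exact hconst _ _

lemma isNC_of_pushforward_eq {q : (Fin n → Bool) → ℝ} (hq0 : 0 ≤ q) (hq1 : ∑ o, q o = 1)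
    (h : ∀ i, pushforward (fun o => (o i, o (cycSucc i))) q = edgeDist B i) : IsNC _ B := by
  refine ⟨q, hq0, hq1, fun γ t => ?_⟩
  obtain ⟨i, hi⟩ := exists_edge γ
  obtain rfl : γ = cycCtxC hn i := Subtype.ext hi.symm
  obtain ⟨ab, rfl⟩ := (pairEquiv hn i).surjective t
  exact (congrFun (h i) ab).symm.trans (pushforward_apply_equiv
    ((cycleScenario n hn).restr (cycCtxC hn i).1) q (pairEquiv hn i) ab).symm

end CycleScenario

section OddSignVectors

variable {n : ℕ}

lemma IsSign.isPMOne {a : Fin n → ℤ} (ha : IsSign a) : IsPMOne fun i => (a i : ℝ) :=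
  fun i => by rcases ha i with h | h <;> simp [h]

lemma isOddSign_iff_prod_eq_neg_one {a : Fin n → ℤ} (ha : IsSign a) :
    IsOddSign a ↔ ∏ i, (a i : ℝ) = -1 := by
  rw [ha.isPMOne.prod_eq_neg_one_pow, neg_one_pow_eq_neg_one_iff_odd (by norm_num), IsOddSign]
  simp only [← Int.cast_one (R := ℝ), ← Int.cast_neg, Int.cast_inj]

lemma card_filter_eq_add_two_le {a a' : Fin n → ℤ} (ha : IsSign a) (ha' : IsSign a')
    (hao : IsOddSign a) (hao' : IsOddSign a') (hne : a ≠ a') : #{i | a i = a' i} + 2 ≤ n := by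
  have hpm : IsPMOne fun i => (a i : ℝ) * a' i := fun i => by
    rcases ha i with h | h <;> rcases ha' i with h' | h' <;> simp [h, h']
  have hprod : ∏ i, ((a i : ℝ) * a' i) = 1 := by
    rw [prod_mul_distrib, (isOddSign_iff_prod_eq_neg_one ha).mp hao,
      (isOddSign_iff_prod_eq_neg_one ha').mp hao']
    norm_num
  have hne' : univ.filter (fun i => (a i : ℝ) * a' i = -1) = univ.filter fun i => a i ≠ a' i :=
    filter_congr fun i _ => by
      rcases ha i with h | h <;> rcases ha' i with h' | h' <;> norm_num [h, h']
  rw [hpm.prod_eq_neg_one_pow, neg_one_pow_eq_one_iff_even (by norm_num), hne'] at hprod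
  have hpos : 0 < #{i | a i ≠ a' i} := by
    obtain ⟨i, hi⟩ := Function.ne_iff.mp hne
    exact card_pos.mpr ⟨i, by simp [hi]⟩
  have htotal := card_filter_add_card_filter_not (s := univ) (p := fun i => a i = a' i)
  rw [card_univ, Fintype.card_fin] at htotal
  obtain ⟨k, hk⟩ := hprod
  simp only [ne_eq] at hk hpos
  omega

theorem eq_of_sub_two_lt_Ifun {hn : 3 ≤ n} {B : Behavior (cycleScenario n hn)}
    (hProb : IsProb _ B) {a a' : Fin n → ℤ} (ha : IsSign a) (ha' : IsSign a')
    (hao : IsOddSign a) (hao' : IsOddSign a')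
    (h : (n : ℝ) - 2 < Ifun hn a B) (h' : (n : ℝ) - 2 < Ifun hn a' B) : a = a' := by
  by_contra hne
  have hE : ∀ i ∈ univ, |corrCtx B (cycCtxC hn i)| ≤ 1 := fun i _ => by
    rw [corrCtx_eq_correlator]
    exact (abs_le_one_of_mem_corrIcc
      (correlator_mem_corrIcc (edgeDist_nonneg hProb i) (sum_edgeDist hProb i))).2.2
  have hsum := ha.isPMOne.sum_mul_add_sum_mul_le ha'.isPMOne univ hE
  have hcard : (#{i | (a i : ℝ) = a' i} : ℝ) + 2 ≤ n := by
    simp only [Int.cast_inj]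
    exact_mod_cast card_filter_eq_add_two_le ha ha' hao hao' hne
  unfold Ifun at h h'
  linarith

end OddSignVectors

section Existence

variable {N : ℕ} {hn : 3 ≤ N + 1} (B : Behavior (cycleScenario (N + 1) hn))

def vertexMean (i : ℕ) : ℝ := mean₁ (edgeDist B (Fin.ofNat (N + 1) i))

def edgeCorr (i : ℕ) : ℝ := correlator (edgeDist B (Fin.ofNat (N + 1) i))

variable {B}

lemma edgeDist_ofNat (hProb : IsProb _ B) (hND : IsND _ B) (i : ℕ) :
    edgeDist B (Fin.ofNat (N + 1) i) =
      pairDist (vertexMean B i) (vertexMean B (i + 1)) (edgeCorr B i) := by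
  have hsucc : cycSucc (Fin.ofNat (N + 1) i) = Fin.ofNat (N + 1) (i + 1) := by
    ext
    simp [cycSucc, Nat.add_mod]
  rw [eq_pairDist (sum_edgeDist hProb _), mean₂_eq_mean₁ (pushforward_snd_edgeDist hND _),
    hsucc]
  rfl

lemma edgeCorr_mem_corrIcc (hProb : IsProb _ B) (hND : IsND _ B) (i : ℕ) :
    edgeCorr B i ∈ corrIcc (vertexMean B i) (vertexMean B (i + 1)) :=
  pairDist_nonneg_iff.mp (edgeDist_ofNat hProb hND i ▸ edgeDist_nonneg hProb _)

lemma vertexMean_add_self : vertexMean B (N + 1) = vertexMean B 0 := by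
  simp [vertexMean]

lemma cycleIneqs_of_forall_Ifun_le
    (h : ∀ a, IsSign a → IsOddSign a → Ifun hn a B ≤ ((N + 1 : ℕ) : ℝ) - 2) :
    CycleIneqs N (edgeCorr B) (edgeCorr B N) := by
  intro s hs hodd
  let a : Fin (N + 1) → ℤ := fun i => if s i = 1 then 1 else -1
  have hcast : ∀ i, (a i : ℝ) = s i := fun i => by rcases hs i with h | h <;> norm_num [a, h]
  have ha : IsSign a := fun i => by by_cases h : s i = 1 <;> simp [a, h]
  have hao : IsOddSign a := by
    rw [isOddSign_iff_prod_eq_neg_one ha]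
    simpa only [hcast, Fin.prod_univ_eq_prod_range s] using hodd
  have hI : Ifun _ a B = ∑ i ∈ range (N + 1), s i * edgeCorr B i := by
    rw [Ifun, ← Fin.sum_univ_eq_sum_range]
    refine sum_congr rfl fun i _ => ?_
    rw [hcast, corrCtx_eq_correlator]
    simp [edgeCorr]
  have := h a ha hao
  rw [hI, sum_range_succ] at this
  push_cast at this
  linarith

theorem isNC_of_forall_Ifun_le (hProb : IsProb _ B) (hND : IsND _ B)
    (h : ∀ a, IsSign a → IsOddSign a → Ifun hn a B ≤ ((N + 1 : ℕ) : ℝ) - 2) : IsNC _ B := by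
  obtain ⟨q, hq0, hq1, hqpath, hqclose⟩ :=
    exists_cycle_joint (fun i _ => edgeCorr_mem_corrIcc hProb hND i)
      (vertexMean_add_self (B := B) ▸ edgeCorr_mem_corrIcc hProb hND N)
      (cycleIneqs_of_forall_Ifun_le h)
  refine isNC_of_pushforward_eq hq0 hq1 fun i => ?_
  have hpair : (fun o : Fin (N + 1) → Bool => (o i, o (cycSucc i))) =
      pairAt i.val (cycSucc i).val := by
    funext o
    simp only [pairAt, bitAt_val]
  have hi : edgeDist B i =
      pairDist (vertexMean B i) (vertexMean B (i + 1)) (edgeCorr B i) := by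
    simpa using edgeDist_ofNat hProb hND i
  rw [hpair, hi]
  rcases Nat.lt_succ_iff_lt_or_eq.mp i.2 with hlt | heq
  · rw [show (cycSucc i).val = i.val + 1 from Nat.mod_eq_of_lt (by omega), hqpath _ hlt]
  · rw [show (cycSucc i).val = 0 by simp [cycSucc, heq], heq, hqclose, vertexMean_add_self]

end Existence

/-- every contextual nondisturbing behavior on the `n`-cycle scenario
violates exactly one of the `n`-cycle noncontextuality inequalities. -/
theorem statement_4 (n : ℕ) (hn : 3 ≤ n) (B : Behavior (cycleScenario n hn))
    (hProb : IsProb _ B) (hND : IsND _ B) (hNC : ¬ IsNC _ B) :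
    ∃! a : Fin n → ℤ, IsSign a ∧ IsOddSign a ∧ (n : ℝ) - 2 < Ifun hn a B := by
  obtain ⟨a, ha⟩ : ∃ a : Fin n → ℤ, IsSign a ∧ IsOddSign a ∧ (n : ℝ) - 2 < Ifun hn a B := by
    by_contra! hle
    obtain ⟨N, rfl⟩ : ∃ N, n = N + 1 := ⟨n - 1, by omega⟩
    exact hNC (isNC_of_forall_Ifun_le hProb hND hle)
  exact ⟨a, ha, fun a' ha' =>
    eq_of_sub_two_lt_Ifun hProb ha'.1 ha.1 ha'.2.1 ha.2.1 ha'.2.2 ha.2.2⟩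
end
end

section
/- For every nondisturbing behavior B on a compatibility scenario Υ and every noncontextual behavior B_NC on Υ, there exists a noncontextual wiring with input scenario Υ, whose output scenario has the same maximal contexts and the same context-outcome sets as Υ, mapping B to B_NC; i.e., B → B_NC for every B ∈ ND(Υ) and B_NC ∈ NC(Υ). -/
noncomputable section

/-! The free operations can discard the input box entirely. Sample a global
assignment from the global section of `B_NC` in the pre-processing, feed the context `β`
itself to the input box, ignore its outcome, and let the post-processing output the
pre-processing outcome. -/

theorem Fintype.prod_boole_eq_ite_eq {ι M₀ : Type*} [Fintype ι] [CommMonoidWithZero M₀]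
    {α : ι → Type*} [∀ i, DecidableEq (α i)] (t r : (i : ι) → α i) :
    ∏ i, (if t i = r i then (1 : M₀) else 0) = if r = t then 1 else 0 := by
  simp only [Fintype.prod_boole, funext_iff, eq_comm]

def Wiring.discardAndPrepare {S : Scenario} (pM : S.Glob → ℝ) (hpos : ∀ o, 0 ≤ pM o)
    (hsum : ∑ o, pM o = 1) : Wiring S S where
  OPre := S.O
  pPre := pM
  pPre_nonneg := hpos
  pPre_sum := hsum
  f β _ := β
  wmap _ _ m := m
  nPhi _ _ := 1
  q _ _ _ := 1
  q_nonneg _ _ _ := zero_le_one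
  q_sum _ _ := by simp
  resp _ r m _ _ u := if u = r m then 1 else 0
  resp_nonneg _ _ _ _ _ _ := by split <;> norm_num
  resp_sum _ _ _ _ _ := by simp

theorem Wiring.discardAndPrepare_apply {S : Scenario} {pM : S.Glob → ℝ}
    (hpos : ∀ o, 0 ≤ pM o) (hsum : ∑ o, pM o = 1) (B : Behavior S) (β : S.Ctx)
    (hB : ∑ s, B β s = 1) (t : S.JO β.1) :
    (discardAndPrepare pM hpos hsum).apply B β t =
      ∑ o : S.Glob, if S.restr β.1 o = t then pM o else 0 := by
  let W := discardAndPrepare pM hpos hsum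
  have hpost (r s : S.JO β.1) : (∑ φ : Fin (W.nPhi β r),
      W.q β r φ * ∏ m : S.El β.1, W.resp β r m φ (s (W.wmap β r m)) (t m)) =
        if r = t then 1 else 0 := by
    simp only [W, discardAndPrepare, one_mul]
    exact (Fin.sum_univ_one _).trans (Fintype.prod_boole_eq_ite_eq t r)
  calc W.apply B β t
      = ∑ r : S.JO β.1, ∑ s : S.JO β.1, W.preB β r * B β s * if r = t then 1 else 0 :=
        Finset.sum_congr rfl fun r _ => Finset.sum_congr rfl fun s _ =>
          congrArg (W.preB β r * B β s * ·) (hpost r s)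
    _ = ∑ r : S.JO β.1, W.preB β r * (∑ s, B β s) * if r = t then 1 else 0 := by
        simp only [← Finset.sum_mul, ← Finset.mul_sum]
    _ = W.preB β t := by
        simp only [hB, mul_one, mul_ite, mul_zero]
        exact Fintype.sum_ite_eq' t _
    _ = ∑ o : S.Glob, if S.restr β.1 o = t then pM o else 0 := rfl

theorem statement_7_general (S : Scenario) (B : Behavior S) (hProb : IsProb S B)
    (BNC : Behavior S) (hNC : IsNC S BNC) :
    ∃ W : Wiring S S, W.apply B = BNC := by
  obtain ⟨pM, hpos, hsum, hmarg⟩ := hNC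
  refine ⟨Wiring.discardAndPrepare pM hpos hsum, funext fun β => funext fun t => ?_⟩
  rw [Wiring.discardAndPrepare_apply hpos hsum B β (hProb β).2, hmarg]

/-- for every nondisturbing behavior `B` on `Υ` and every noncontextual
behavior `B_NC` on `Υ` there is a noncontextual wiring (with output scenario having the
same maximal contexts and context-outcome sets as `Υ`) mapping `B` to `B_NC`. -/
theorem statement_7 (S : Scenario) (B : Behavior S) (hProb : IsProb S B)
    (hND : IsND S B) (BNC : Behavior S) (hNC : IsNC S BNC) :
    ∃ W : Wiring S S, W.apply B = BNC :=
  statement_7_general S B hProb BNC hNC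
end
end

section
/- For any fixed compatibility scenarios Υ_in and Υ_out, the set NCW(Υ_in → Υ_out) of maps on behaviors induced by noncontextual wirings of this type is convex: for any W_1, W_2 ∈ NCW(Υ_in → Υ_out) and any α ∈ [0, 1], there exists W ∈ NCW(Υ_in → Υ_out) such that W(B) = α·W_1(B) + (1−α)·W_2(B) (contextwise convex combination) for every nondisturbing behavior B on Υ_in. -/
noncomputable section

namespace S8Aux

open Finset

/-- Sum over dependent triples factors into an iterated sum. -/
theorem sum_triple {ι : Type} [Fintype ι] [DecidableEq ι]
    (A B C : ι → Type) [∀ i, Fintype (A i)] [∀ i, Fintype (B i)] [∀ i, Fintype (C i)]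
    [∀ i, DecidableEq (A i)] [∀ i, DecidableEq (B i)] [∀ i, DecidableEq (C i)]
    (g : ((i : ι) → A i) → ((i : ι) → B i) → ((i : ι) → C i) → ℝ) :
    ∑ o : (i : ι) → A i × B i × C i,
      g (fun i => (o i).1) (fun i => (o i).2.1) (fun i => (o i).2.2)
    = ∑ a, ∑ b, ∑ c, g a b c := by
  classical
  let E : ((i : ι) → A i × B i × C i) ≃
      (((i : ι) → A i) × ((i : ι) → B i) × ((i : ι) → C i)) :=
    { toFun := fun o => (fun i => (o i).1, fun i => (o i).2.1, fun i => (o i).2.2)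
      invFun := fun p i => (p.1 i, p.2.1 i, p.2.2 i)
      left_inv := fun o => rfl
      right_inv := fun p => rfl }
  calc ∑ o : (i : ι) → A i × B i × C i,
        g (fun i => (o i).1) (fun i => (o i).2.1) (fun i => (o i).2.2)
      = ∑ o, (fun p : ((i : ι) → A i) × ((i : ι) → B i) × ((i : ι) → C i) =>
          g p.1 p.2.1 p.2.2) (E o) := rfl
    _ = ∑ p : ((i : ι) → A i) × ((i : ι) → B i) × ((i : ι) → C i),
          g p.1 p.2.1 p.2.2 := Equiv.sum_comp E
            (fun p : ((i : ι) → A i) × ((i : ι) → B i) × ((i : ι) → C i) =>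
              g p.1 p.2.1 p.2.2)
    _ = ∑ a, ∑ p : ((i : ι) → B i) × ((i : ι) → C i), g a p.1 p.2 :=
          Fintype.sum_prod_type _
    _ = ∑ a, ∑ b, ∑ c, g a b c :=
          Finset.sum_congr rfl fun a _ => Fintype.sum_prod_type _

theorem sum3_mul {A B C : Type} [Fintype A] [Fintype B] [Fintype C]
    (F : A → ℝ) (G : B → ℝ) (H : C → ℝ) :
    ∑ a, ∑ b, ∑ c, F a * G b * H c = (∑ a, F a) * (∑ b, G b) * (∑ c, H c) := by
  rw [Finset.sum_mul_sum, Finset.sum_mul]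
  refine Finset.sum_congr rfl fun a _ => ?_
  rw [Finset.sum_mul]
  refine Finset.sum_congr rfl fun b _ => ?_
  rw [Finset.mul_sum]

theorem sum_if_const {ι : Type} [Fintype ι] [DecidableEq ι] (v : Bool) (c : ℝ) :
    ∑ b : ι → Bool, (if ∀ i, b i = v then c else 0) = c := by
  rw [Finset.sum_eq_single (fun _ => v)]
  · simp
  · intro b _ hb; rw [if_neg]; intro h; exact hb (funext h)
  · simp

theorem ite_mul3 {P Q R : Prop} [Decidable P] [Decidable Q] [Decidable R] (x y z : ℝ) :
    (if P ∧ Q ∧ R then x * y * z else 0)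
      = (if P then x else 0) * (if Q then y else 0) * (if R then z else 0) := by
  split_ifs <;> simp_all

theorem sum_preB {S T : Scenario} (W : Wiring S T) (β : T.Ctx) :
    ∑ r, W.preB β r = 1 := by
  classical
  unfold Wiring.preB
  rw [Finset.sum_comm]
  have h : ∀ o : (x : T.M) → W.OPre x,
      (∑ r : (x : T.El β.1) → W.OPre x.1,
        if (fun x : T.El β.1 => o x.1) = r then W.pPre o else 0) = W.pPre o := by
    intro o
    rw [Finset.sum_ite_eq]
    simp
  simp only [h]
  exact W.pPre_sum

theorem apply_eq {S T : Scenario} (W : Wiring S T) (B : Behavior S) (β : T.Ctx)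
    (t : T.JO β.1) :
    W.apply B β t = ∑ r, W.preB β r *
      ∑ s, B (W.f β r) s * ∑ φ, W.q β r φ *
        ∏ m, W.resp β r m φ (s (W.wmap β r m)) (t m) := by
  unfold Wiring.apply
  refine Finset.sum_congr rfl fun r _ => ?_
  rw [Finset.mul_sum]
  exact Finset.sum_congr rfl fun s _ => by ring

theorem apply_empty {S T : Scenario} (W : Wiring S T) (B : Behavior S)
    (hB : IsProb S B) (β : T.Ctx) (hE : IsEmpty (T.El β.1)) (t : T.JO β.1) :
    W.apply B β t = 1 := by
  classical
  rw [apply_eq]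
  have hone : ∀ r, (∑ s, B (W.f β r) s * ∑ φ, W.q β r φ *
      ∏ m : T.El β.1, W.resp β r m φ (s (W.wmap β r m)) (t m)) = 1 := by
    intro r
    haveI := hE
    simp only [Finset.univ_eq_empty, Finset.prod_empty, mul_one]
    simp [W.q_sum, (hB (W.f β r)).2]
  simp only [hone, mul_one]
  exact sum_preB W β

section Mix

variable {S T : Scenario} (W₁ W₂ : Wiring S T) (α : ℝ)

/-- Selecting one of the two wirings by a boolean. -/
abbrev V (b : Bool) : Wiring S T := bif b then W₁ else W₂

/-- Project the combined pre-processing outcome to the selected wiring's one. -/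
def ρ : (b : Bool) → {β : T.Ctx} →
    ((x : T.El β.1) → Bool × W₁.OPre x.1 × W₂.OPre x.1) →
    ((x : T.El β.1) → (V W₁ W₂ b).OPre x.1)
  | true => fun r x => (r x).2.1
  | false => fun r x => (r x).2.2

/-- The shared coin read from a combined pre-processing outcome. -/
def fl {β : T.Ctx} (r : (x : T.El β.1) → Bool × W₁.OPre x.1 × W₂.OPre x.1) : Bool :=
  decide (∀ m, (r m).1 = true)

variable (h0 : 0 ≤ α) (h1 : α ≤ 1)

/-- The mixture wiring. -/
def mix : Wiring S T where
  OPre x := Bool × W₁.OPre x × W₂.OPre x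
  pPre o := ((if ∀ x, (o x).1 = true then α else 0) +
      (if ∀ x, (o x).1 = false then 1 - α else 0)) *
    W₁.pPre (fun x => (o x).2.1) * W₂.pPre (fun x => (o x).2.2)
  pPre_nonneg o := by
    have hc : (0:ℝ) ≤ (if ∀ x, (o x).1 = true then α else 0) +
        (if ∀ x, (o x).1 = false then 1 - α else 0) := by
      apply add_nonneg <;> (split_ifs <;> simp [h0, sub_nonneg.2 h1])
    exact mul_nonneg (mul_nonneg hc (W₁.pPre_nonneg _)) (W₂.pPre_nonneg _)
  pPre_sum := by
    classical
    refine Eq.trans (sum_triple (fun _ : T.M => Bool) (fun x => W₁.OPre x)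
      (fun x => W₂.OPre x)
      (fun b o1 o2 => ((if ∀ x, b x = true then α else 0) +
        (if ∀ x, b x = false then 1 - α else 0)) *
        W₁.pPre o1 * W₂.pPre o2)) ?_
    rw [sum3_mul, W₁.pPre_sum, W₂.pPre_sum, Finset.sum_add_distrib,
      sum_if_const, sum_if_const]
    ring
  f β r := (V W₁ W₂ (fl W₁ W₂ r)).f β (ρ W₁ W₂ (fl W₁ W₂ r) r)
  wmap β r := (V W₁ W₂ (fl W₁ W₂ r)).wmap β (ρ W₁ W₂ (fl W₁ W₂ r) r)
  nPhi β r := (V W₁ W₂ (fl W₁ W₂ r)).nPhi β (ρ W₁ W₂ (fl W₁ W₂ r) r)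
  q β r := (V W₁ W₂ (fl W₁ W₂ r)).q β (ρ W₁ W₂ (fl W₁ W₂ r) r)
  q_nonneg β r := (V W₁ W₂ (fl W₁ W₂ r)).q_nonneg β (ρ W₁ W₂ (fl W₁ W₂ r) r)
  q_sum β r := (V W₁ W₂ (fl W₁ W₂ r)).q_sum β (ρ W₁ W₂ (fl W₁ W₂ r) r)
  resp β r := (V W₁ W₂ (fl W₁ W₂ r)).resp β (ρ W₁ W₂ (fl W₁ W₂ r) r)
  resp_nonneg β r := (V W₁ W₂ (fl W₁ W₂ r)).resp_nonneg β (ρ W₁ W₂ (fl W₁ W₂ r) r)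
  resp_sum β r := (V W₁ W₂ (fl W₁ W₂ r)).resp_sum β (ρ W₁ W₂ (fl W₁ W₂ r) r)

theorem mix_preB (β : T.Ctx)
    (r : (x : T.El β.1) → Bool × W₁.OPre x.1 × W₂.OPre x.1) :
    (mix W₁ W₂ α h0 h1).preB β r =
      ((if ∀ m, (r m).1 = true then α else 0) +
        (if ∀ m, (r m).1 = false then 1 - α else 0)) *
      W₁.preB β (fun x => (r x).2.1) * W₂.preB β (fun x => (r x).2.2) := by
  classical
  refine Eq.trans (sum_triple (fun _ : T.M => Bool) (fun x => W₁.OPre x)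
    (fun x => W₂.OPre x)
    (fun b o1 o2 =>
      if (fun x : T.El β.1 => (b x.1, o1 x.1, o2 x.1)) = r then
        ((if ∀ x, b x = true then α else 0) +
          (if ∀ x, b x = false then 1 - α else 0)) *
          W₁.pPre o1 * W₂.pPre o2
      else 0)) ?_
  have hsplit : ∀ (b : T.M → Bool) (o1 : (x : T.M) → W₁.OPre x)
      (o2 : (x : T.M) → W₂.OPre x),
      ((fun x : T.El β.1 => (b x.1, o1 x.1, o2 x.1)) = r) ↔
      (((fun x : T.El β.1 => b x.1) = fun x => (r x).1) ∧
        ((fun x : T.El β.1 => o1 x.1) = fun x => (r x).2.1) ∧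
        ((fun x : T.El β.1 => o2 x.1) = fun x => (r x).2.2)) := by
    intro b o1 o2
    simp only [funext_iff, Prod.ext_iff, forall_and]
  have hpt : ∀ (b : T.M → Bool) (o1 : (x : T.M) → W₁.OPre x)
      (o2 : (x : T.M) → W₂.OPre x),
      (if (fun x : T.El β.1 => (b x.1, o1 x.1, o2 x.1)) = r then
        ((if ∀ x, b x = true then α else 0) +
          (if ∀ x, b x = false then 1 - α else 0)) *
          W₁.pPre o1 * W₂.pPre o2 else 0)
      = (if (fun x : T.El β.1 => b x.1) = (fun x => (r x).1) then
          ((if ∀ x, b x = true then α else 0) +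
            (if ∀ x, b x = false then 1 - α else 0)) else 0) *
        (if (fun x : T.El β.1 => o1 x.1) = (fun x => (r x).2.1) then
          W₁.pPre o1 else 0) *
        (if (fun x : T.El β.1 => o2 x.1) = (fun x => (r x).2.2) then
          W₂.pPre o2 else 0) := by
    intro b o1 o2
    rw [← ite_mul3]
    rw [if_congr (hsplit b o1 o2) rfl rfl]
  simp only [hpt]
  rw [sum3_mul]
  have hflag : (∑ b : T.M → Bool,
      if (fun x : T.El β.1 => b x.1) = (fun x => (r x).1) then
        ((if ∀ x, b x = true then α else 0) +
          (if ∀ x, b x = false then 1 - α else 0)) else 0)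
      = (if ∀ m, (r m).1 = true then α else 0) +
        (if ∀ m, (r m).1 = false then 1 - α else 0) := by
    have hv : ∀ (v : Bool) (c : ℝ), (∑ b : T.M → Bool,
        if (fun x : T.El β.1 => b x.1) = (fun x => (r x).1) then
          (if ∀ x, b x = v then c else 0) else 0)
        = if ∀ m : T.El β.1, (r m).1 = v then c else 0 := by
      intro v c
      rw [Finset.sum_eq_single (fun _ => v)]
      · simp [funext_iff, eq_comm]
      · intro b _ hb
        split_ifs with hc hall
        · exact absurd (funext hall) hb
        · rfl
        · rfl
      · simp
    have hdistrib : ∀ b : T.M → Bool,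
        (if (fun x : T.El β.1 => b x.1) = (fun x => (r x).1) then
          ((if ∀ x, b x = true then α else 0) +
            (if ∀ x, b x = false then 1 - α else 0)) else 0)
        = (if (fun x : T.El β.1 => b x.1) = (fun x => (r x).1) then
            (if ∀ x, b x = true then α else 0) else 0) +
          (if (fun x : T.El β.1 => b x.1) = (fun x => (r x).1) then
            (if ∀ x, b x = false then 1 - α else 0) else 0) := by
      intro b; split_ifs <;> simp
    simp only [hdistrib]
    rw [Finset.sum_add_distrib, hv, hv]
  rw [hflag]
  rfl

/-- The "rest" of the wiring expression for a selected wiring. -/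
def Rst (B : Behavior S) (β : T.Ctx) (t : T.JO β.1) (b : Bool)
    (r' : (x : T.El β.1) → (V W₁ W₂ b).OPre x.1) : ℝ :=
  ∑ s, B ((V W₁ W₂ b).f β r') s * ∑ φ, (V W₁ W₂ b).q β r' φ *
    ∏ m, (V W₁ W₂ b).resp β r' m φ (s ((V W₁ W₂ b).wmap β r' m)) (t m)

theorem Rst_fl (B : Behavior S) (β : T.Ctx) (t : T.JO β.1)
    (r : (x : T.El β.1) → Bool × W₁.OPre x.1 × W₂.OPre x.1) :
    Rst W₁ W₂ B β t (fl W₁ W₂ r) (ρ W₁ W₂ (fl W₁ W₂ r) r)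
      = if ∀ m, (r m).1 = true then Rst W₁ W₂ B β t true (fun x => (r x).2.1)
        else Rst W₁ W₂ B β t false (fun x => (r x).2.2) := by
  by_cases h : ∀ m, (r m).1 = true
  · rw [if_pos h]
    have hf : fl W₁ W₂ r = true := decide_eq_true h
    rw [hf]
    rfl
  · rw [if_neg h]
    have hf : fl W₁ W₂ r = false := decide_eq_false h
    rw [hf]
    rfl

end Mix

end S8Aux

/-- for fixed scenarios `Υ_in`, `Υ_out`, the set `NCW(Υ_in → Υ_out)` of
maps on behaviors induced by noncontextual wirings is convex. -/
theorem statement_8 (S T : Scenario) (W₁ W₂ : Wiring S T) (α : ℝ)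
    (h0 : 0 ≤ α) (h1 : α ≤ 1) :
    ∃ W : Wiring S T, ∀ B : Behavior S, IsProb S B → IsND S B →
      ∀ (β : T.Ctx) (t : T.JO β.1),
        W.apply B β t = α * W₁.apply B β t + (1 - α) * W₂.apply B β t := by
  classical
  refine ⟨S8Aux.mix W₁ W₂ α h0 h1, ?_⟩
  intro B hB _ β t
  rcases isEmpty_or_nonempty (T.El β.1) with hE | hNE
  · rw [S8Aux.apply_empty _ B hB β hE t, S8Aux.apply_empty W₁ B hB β hE t,
      S8Aux.apply_empty W₂ B hB β hE t]
    ring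
  · have h₁ : W₁.apply B β t
        = ∑ r1, W₁.preB β r1 * S8Aux.Rst W₁ W₂ B β t true r1 :=
      S8Aux.apply_eq W₁ B β t
    have h₂ : W₂.apply B β t
        = ∑ r2, W₂.preB β r2 * S8Aux.Rst W₁ W₂ B β t false r2 :=
      S8Aux.apply_eq W₂ B β t
    have hm : (S8Aux.mix W₁ W₂ α h0 h1).apply B β t =
        ∑ r : (x : T.El β.1) → Bool × W₁.OPre x.1 × W₂.OPre x.1,
          (S8Aux.mix W₁ W₂ α h0 h1).preB β r *
            S8Aux.Rst W₁ W₂ B β t (S8Aux.fl W₁ W₂ r)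
              (S8Aux.ρ W₁ W₂ (S8Aux.fl W₁ W₂ r) r) :=
      S8Aux.apply_eq _ B β t
    rw [h₁, h₂, hm]
    have hpoint : ∀ r : (x : T.El β.1) → Bool × W₁.OPre x.1 × W₂.OPre x.1,
        (S8Aux.mix W₁ W₂ α h0 h1).preB β r *
          S8Aux.Rst W₁ W₂ B β t (S8Aux.fl W₁ W₂ r)
            (S8Aux.ρ W₁ W₂ (S8Aux.fl W₁ W₂ r) r)
        = ((if ∀ m, (r m).1 = true then α else 0) +
            (if ∀ m, (r m).1 = false then 1 - α else 0)) *
          W₁.preB β (fun x => (r x).2.1) * W₂.preB β (fun x => (r x).2.2) *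
          (if ∀ m, (r m).1 = true then
              S8Aux.Rst W₁ W₂ B β t true (fun x => (r x).2.1)
            else S8Aux.Rst W₁ W₂ B β t false (fun x => (r x).2.2)) :=
      fun r => by rw [S8Aux.mix_preB, S8Aux.Rst_fl]
    calc ∑ r : (x : T.El β.1) → Bool × W₁.OPre x.1 × W₂.OPre x.1,
          (S8Aux.mix W₁ W₂ α h0 h1).preB β r *
            S8Aux.Rst W₁ W₂ B β t (S8Aux.fl W₁ W₂ r)
              (S8Aux.ρ W₁ W₂ (S8Aux.fl W₁ W₂ r) r)
        = ∑ rb : T.El β.1 → Bool, ∑ r1, ∑ r2,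
            ((if ∀ m, rb m = true then α else 0) +
              (if ∀ m, rb m = false then 1 - α else 0)) *
            W₁.preB β r1 * W₂.preB β r2 *
            (if ∀ m, rb m = true then S8Aux.Rst W₁ W₂ B β t true r1
              else S8Aux.Rst W₁ W₂ B β t false r2) := by
          simp only [hpoint]
          exact S8Aux.sum_triple (fun _ : T.El β.1 => Bool)
            (fun x => W₁.OPre x.1) (fun x => W₂.OPre x.1)
            (fun rb r1 r2 =>
              ((if ∀ m, rb m = true then α else 0) +
                (if ∀ m, rb m = false then 1 - α else 0)) *
              W₁.preB β r1 * W₂.preB β r2 *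
              (if ∀ m, rb m = true then S8Aux.Rst W₁ W₂ B β t true r1
                else S8Aux.Rst W₁ W₂ B β t false r2))
      _ = ∑ r1, ∑ r2, ∑ rb : T.El β.1 → Bool,
            ((if ∀ m, rb m = true then α else 0) +
              (if ∀ m, rb m = false then 1 - α else 0)) *
            W₁.preB β r1 * W₂.preB β r2 *
            (if ∀ m, rb m = true then S8Aux.Rst W₁ W₂ B β t true r1
              else S8Aux.Rst W₁ W₂ B β t false r2) := by
          rw [Finset.sum_comm]
          exact Finset.sum_congr rfl fun r1 _ => Finset.sum_comm
      _ = ∑ r1, ∑ r2,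
            (α * (W₁.preB β r1 * W₂.preB β r2 * S8Aux.Rst W₁ W₂ B β t true r1) +
              (1 - α) * (W₁.preB β r1 * W₂.preB β r2 *
                S8Aux.Rst W₁ W₂ B β t false r2)) := by
          refine Finset.sum_congr rfl fun r1 _ => Finset.sum_congr rfl fun r2 _ => ?_
          obtain ⟨m₀⟩ := hNE
          have hne : (fun _ : T.El β.1 => true) ≠ (fun _ : T.El β.1 => false) :=
            fun h => by simpa using congrFun h m₀
          have hpt2 : ∀ rb : T.El β.1 → Bool,
              ((if ∀ m, rb m = true then α else 0) +
                (if ∀ m, rb m = false then 1 - α else 0)) *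
              W₁.preB β r1 * W₂.preB β r2 *
              (if ∀ m, rb m = true then S8Aux.Rst W₁ W₂ B β t true r1
                else S8Aux.Rst W₁ W₂ B β t false r2)
              = (if rb = (fun _ => true) then
                  α * (W₁.preB β r1 * W₂.preB β r2 *
                    S8Aux.Rst W₁ W₂ B β t true r1) else 0) +
                (if rb = (fun _ => false) then
                  (1 - α) * (W₁.preB β r1 * W₂.preB β r2 *
                    S8Aux.Rst W₁ W₂ B β t false r2) else 0) := by
            intro rb
            have hiffT : (∀ m, rb m = true) ↔ rb = (fun _ => true) :=
              ⟨fun h => funext h, fun h m => by rw [h]⟩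
            have hiffF : (∀ m, rb m = false) ↔ rb = (fun _ => false) :=
              ⟨fun h => funext h, fun h m => by rw [h]⟩
            simp only [hiffT, hiffF]
            by_cases hT : rb = (fun _ => true)
            · subst hT
              simp only [eq_self_iff_true, if_true, hne, if_false]
              ring
            · by_cases hF : rb = (fun _ => false)
              · subst hF
                simp only [eq_self_iff_true, if_true, Ne.symm hne, if_false]
                ring
              · simp only [if_neg hT, if_neg hF]
                ring
          simp only [hpt2]
          rw [Finset.sum_add_distrib]
          simp [Finset.sum_ite_eq']
      _ = ∑ r1, (α * (W₁.preB β r1 * S8Aux.Rst W₁ W₂ B β t true r1) +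
            (1 - α) * (W₁.preB β r1 *
              ∑ r2, W₂.preB β r2 * S8Aux.Rst W₁ W₂ B β t false r2)) := by
          refine Finset.sum_congr rfl fun r1 _ => ?_
          rw [Finset.sum_add_distrib]
          congr 1
          · calc ∑ r2, α * (W₁.preB β r1 * W₂.preB β r2 *
                  S8Aux.Rst W₁ W₂ B β t true r1)
                = ∑ r2, (α * (W₁.preB β r1 * S8Aux.Rst W₁ W₂ B β t true r1)) *
                    W₂.preB β r2 :=
                  Finset.sum_congr rfl fun _ _ => by ring
              _ = (α * (W₁.preB β r1 * S8Aux.Rst W₁ W₂ B β t true r1)) *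
                    ∑ r2, W₂.preB β r2 := (Finset.mul_sum _ _ _).symm
              _ = α * (W₁.preB β r1 * S8Aux.Rst W₁ W₂ B β t true r1) := by
                  rw [S8Aux.sum_preB]; ring
          · rw [Finset.mul_sum, Finset.mul_sum]
            exact Finset.sum_congr rfl fun r2 _ => by ring
      _ = α * (∑ r1, W₁.preB β r1 * S8Aux.Rst W₁ W₂ B β t true r1) +
            (1 - α) * ∑ r2, W₂.preB β r2 * S8Aux.Rst W₁ W₂ B β t false r2 := by
          rw [Finset.sum_add_distrib]
          congr 1
          · rw [Finset.mul_sum]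
          · calc ∑ r1, (1 - α) * (W₁.preB β r1 *
                  ∑ r2, W₂.preB β r2 * S8Aux.Rst W₁ W₂ B β t false r2)
                = ∑ r1, W₁.preB β r1 * ((1 - α) *
                    ∑ r2, W₂.preB β r2 * S8Aux.Rst W₁ W₂ B β t false r2) :=
                  Finset.sum_congr rfl fun _ _ => by ring
              _ = (∑ r1, W₁.preB β r1) * ((1 - α) *
                    ∑ r2, W₂.preB β r2 * S8Aux.Rst W₁ W₂ B β t false r2) :=
                  Finset.sum_mul _ _ _ |>.symm
              _ = (1 - α) * ∑ r2, W₂.preB β r2 *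
                    S8Aux.Rst W₁ W₂ B β t false r2 := by
                  rw [S8Aux.sum_preB]; ring
end
end

section
/- Let Υ be a compatibility scenario, B' ∈ NC(Υ) a noncontextual behavior, and α ∈ [0, 1]. Then there exists a single noncontextual wiring W ∈ NCW(Υ → Υ) such that W(B) = α·B + (1−α)·B' (contextwise convex combination) for every nondisturbing behavior B on Υ. -/
noncomputable section

/-!
The wiring first draws a global outcome assignment `λ` from a global section of `B'`, which
is a legitimate noncontextual pre-processing, and queries the input box on the requested
context itself. A hidden variable of the post-processing, equal to `0` with probability `α`
and to `1` otherwise, then decides whether every output copies the box's outcome or the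
restriction of `λ` to the context. Since that restriction is distributed according to `B'`,
the output is `α • B + (1 - α) • B'` on every context.
-/

open Finset

lemma prod_boole_apply_eq {ι : Type*} [Fintype ι] {κ : ι → Type*} [∀ i, DecidableEq (κ i)]
    [DecidableEq (∀ i, κ i)] (s t : ∀ i, κ i) :
    ∏ i, (if s i = t i then (1 : ℝ) else 0) = if s = t then 1 else 0 := by
  rw [prod_boole]
  simp [funext_iff]

lemma sum_fin_two_mul_prod_boole {ι : Type*} [Fintype ι] {κ : ι → Type*}
    [∀ i, DecidableEq (κ i)] [DecidableEq (∀ i, κ i)] (α : ℝ) (t s r : ∀ i, κ i) :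
    ∑ φ : Fin 2, ![α, 1 - α] φ * ∏ i, (if t i = ![s i, r i] φ then 1 else 0) =
      α * (if t = s then 1 else 0) + (1 - α) * (if t = r then 1 else 0) := by
  simp only [Fin.sum_univ_two, Matrix.cons_val_zero, Matrix.cons_val_one, prod_boole_apply_eq]
  rfl

lemma sum_sum_mul_mix_boole {X : Type*} [Fintype X] [DecidableEq X] {p q : X → ℝ}
    (hp : ∑ x, p x = 1) (hq : ∑ x, q x = 1) (α : ℝ) (t : X) :
    ∑ r, ∑ s, p r * q s * (α * (if t = s then 1 else 0) + (1 - α) * (if t = r then 1 else 0)) =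
      α * q t + (1 - α) * p t := by
  simp only [mul_add, sum_add_distrib, mul_ite, mul_one, mul_zero, sum_ite_eq, mem_univ, if_true]
  simp [← sum_mul, ← mul_sum, hp, hq]
  ring

lemma IsNC.sum_eq_one {S : Scenario} {B : Behavior S} (h : IsNC S B) (γ : S.Ctx) :
    ∑ t, B γ t = 1 := by
  obtain ⟨pM, -, hpM1, hmarg⟩ := h
  simp_rw [hmarg γ]
  rw [sum_comm]
  simpa using hpM1

def mixWiring (S : Scenario) (pM : S.Glob → ℝ) (hpM0 : ∀ o, 0 ≤ pM o)
    (hpM1 : ∑ o, pM o = 1) (α : ℝ) (h0 : 0 ≤ α) (h1 : α ≤ 1) : Wiring S S where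
  OPre := S.O
  pPre := pM
  pPre_nonneg := hpM0
  pPre_sum := hpM1
  f β _ := β
  wmap _ _ m := m
  nPhi _ _ := 2
  q _ _ := ![α, 1 - α]
  q_nonneg _ _ φ := by fin_cases φ <;> simp [h0, h1]
  q_sum _ _ := by simp
  resp _ r m φ o u := if u = ![o, r m] φ then 1 else 0
  resp_nonneg _ _ _ _ _ _ := by positivity
  resp_sum _ _ _ _ _ := by simp

lemma mixWiring_apply {S : Scenario} {pM : S.Glob → ℝ} (hpM0 : ∀ o, 0 ≤ pM o)
    (hpM1 : ∑ o, pM o = 1) {B' : Behavior S}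
    (hmarg : ∀ γ t, B' γ t = ∑ o, if S.restr γ.1 o = t then pM o else 0)
    {α : ℝ} (h0 : 0 ≤ α) (h1 : α ≤ 1) (B : Behavior S) (γ : S.Ctx) (t : S.JO γ.1) :
    (mixWiring S pM hpM0 hpM1 α h0 h1).apply B γ t =
      ∑ r, ∑ s, B' γ r * B γ s *
        (α * (if t = s then 1 else 0) + (1 - α) * (if t = r then 1 else 0)) := by
  refine sum_congr rfl fun r _ => sum_congr rfl fun s _ => ?_
  have hpre : (mixWiring S pM hpM0 hpM1 α h0 h1).preB γ r = B' γ r := (hmarg γ r).symm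
  rw [hpre]
  congr 1
  exact sum_fin_two_mul_prod_boole (κ := fun m : S.El γ.1 => S.O m.1) α t s r

/-- for every noncontextual behavior `B'` on `Υ` and every `α ∈ [0,1]`
there is a single noncontextual wiring `W ∈ NCW(Υ → Υ)` with
`W(B) = α·B + (1-α)·B'` for every nondisturbing behavior `B` on `Υ`. -/
theorem statement_9 (S : Scenario) (B' : Behavior S) (hNC : IsNC S B') (α : ℝ)
    (h0 : 0 ≤ α) (h1 : α ≤ 1) :
    ∃ W : Wiring S S, ∀ B : Behavior S, IsProb S B → IsND S B →
      ∀ (γ : S.Ctx) (t : S.JO γ.1),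
        W.apply B γ t = α * B γ t + (1 - α) * B' γ t := by
  have hB'_sum := hNC.sum_eq_one
  obtain ⟨pM, hpM0, hpM1, hmarg⟩ := hNC
  refine ⟨mixWiring S pM hpM0 hpM1 α h0 h1, fun B hB _ γ t => ?_⟩
  rw [mixWiring_apply hpM0 hpM1 hmarg h0 h1]
  exact sum_sum_mul_mix_boole (hB'_sum γ) (hB γ).2 α t
end
end

section
/- Every noncontextual wiring W admits a common-source-of-randomness representation: there exist a finite set Λ, a probability distribution p on Λ, response functions p_{β_i}(·|λ) on the outcome sets of the pre-processing measurements β_i ∈ M_PRE, response functions p_{δ_i}(·|λ) on the outcome sets of the post-processing measurements, and functions f and g as in the wiring definition, such that for every input behavior B, every β ∈ C_PRE and every joint outcome t, (W(B))_β(t) = Σ_{λ∈Λ} p(λ) Σ_{r∈O_PRE^β} Σ_{s∈O^{f(r)}} [∏_{β_i∈β} p_{β_i}(r_i|λ)] · p_{f(r)}(s) · [∏_{δ_i∈g(s|r,β)} p_{δ_i}(t_i|λ)]; that is, the pre- and post-processing behaviors can be taken to share one source of classical randomness. -/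
noncomputable section

section Aux
variable {ι : Type*} [Fintype ι] [DecidableEq ι] {κ : ι → Type*} [∀ i, Fintype (κ i)]

lemma aux_sum_one (f : ∀ i, κ i → ℝ) (hf : ∀ i, ∑ x, f i x = 1) :
    ∑ g : (∀ i, κ i), ∏ i, f i (g i) = 1 := by
  rw [← Fintype.prod_sum]
  exact Finset.prod_eq_one fun i _ => hf i

lemma aux_marg (f : ∀ i, κ i → ℝ) (hf : ∀ i, ∑ x, f i x = 1) (i0 : ι) (h : κ i0 → ℝ) :
    ∑ g : (∀ i, κ i), (∏ i, f i (g i)) * h (g i0) = ∑ x, f i0 x * h x := by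
  classical
  set F : ∀ i, κ i → ℝ := Function.update f i0 (fun x => f i0 x * h x) with hF
  have hkey : ∀ g : (∀ i, κ i), (∏ i, f i (g i)) * h (g i0) = ∏ i, F i (g i) := by
    intro g
    rw [Finset.prod_eq_mul_prod_sdiff_singleton_of_mem (Finset.mem_univ i0) (fun i => F i (g i)),
        Finset.prod_eq_mul_prod_sdiff_singleton_of_mem (Finset.mem_univ i0) (fun i => f i (g i))]
    have h2 : ∀ i ∈ Finset.univ \ {i0}, F i (g i) = f i (g i) := by
      intro i hi
      rcases Finset.mem_sdiff.mp hi with ⟨_, hi2⟩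
      have hne : i ≠ i0 := by simpa using hi2
      simp [hF, Function.update_of_ne hne]
    have h1 : F i0 (g i0) = f i0 (g i0) * h (g i0) := by simp [hF]
    rw [h1, Finset.prod_congr rfl h2]
    ring
  simp_rw [hkey]
  rw [← Fintype.prod_sum F]
  rw [Finset.prod_eq_mul_prod_sdiff_singleton_of_mem (Finset.mem_univ i0) (fun i => ∑ x, F i x)]
  have h3 : ∀ i ∈ Finset.univ \ {i0}, (∑ x, F i x) = 1 := by
    intro i hi
    rcases Finset.mem_sdiff.mp hi with ⟨_, hi2⟩
    have hne : i ≠ i0 := by simpa using hi2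
    simp [hF, Function.update_of_ne hne, hf i]
  rw [Finset.prod_eq_one h3]
  simp [hF]

end Aux

/-- The common hidden-variable space: a global pre-processing outcome together with a
choice of post-processing hidden value for every context and pre-outcome. -/
abbrev HVtype {S T : Scenario} (W : Wiring S T) : Type :=
  ((x : T.M) → W.OPre x) ×
    ((β : T.Ctx) → (r : (x : T.El β.1) → W.OPre x.1) → Fin (W.nPhi β r))

/-- Decoding numbered pre-processing outcomes back to actual outcomes. -/
def decAux {S T : Scenario} (W : Wiring S T) (β : T.Ctx)
    (r : (x : T.El β.1) → Fin (Fintype.card (W.OPre x.1))) : (x : T.El β.1) → W.OPre x.1 :=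
  fun x => (Fintype.equivFin (W.OPre x.1)).symm (r x)

/-- Encoding pre-processing outcomes as numbers. -/
def encAux {S T : Scenario} (W : Wiring S T) (β : T.Ctx)
    (r : (x : T.El β.1) → W.OPre x.1) : (x : T.El β.1) → Fin (Fintype.card (W.OPre x.1)) :=
  fun x => Fintype.equivFin (W.OPre x.1) (r x)

lemma decAux_encAux {S T : Scenario} (W : Wiring S T) (β : T.Ctx)
    (r : (x : T.El β.1) → W.OPre x.1) : decAux W β (encAux W β r) = r :=
  funext fun x => Equiv.symm_apply_apply _ _

lemma decAux_eq_iff {S T : Scenario} (W : Wiring S T) (β : T.Ctx)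
    (r : (x : T.El β.1) → Fin (Fintype.card (W.OPre x.1)))
    (r0 : (x : T.El β.1) → W.OPre x.1) :
    decAux W β r = r0 ↔ r = encAux W β r0 := by
  simp only [funext_iff, decAux, encAux]
  exact forall_congr' fun x => Equiv.symm_apply_eq _


/-- The post-processing box summed against the input behavior. -/
def KKaux {S T : Scenario} (W : Wiring S T) (B : Behavior S) (β : T.Ctx) (t : T.JO β.1)
    (r' : (x : T.El β.1) → W.OPre x.1) (φ : Fin (W.nPhi β r')) : ℝ :=
  ∑ s : S.JO (W.f β r').1, B (W.f β r') s *
    ∏ m, W.resp β r' m φ (s (W.wmap β r' m)) (t m)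

def Laux {S T : Scenario} (W : Wiring S T) (B : Behavior S) (β : T.Ctx) (t : T.JO β.1)
    (r : (x : T.El β.1) → W.OPre x.1) : ℝ :=
  ∑ φ, W.q β r φ * KKaux W B β t r φ

lemma sum_enc_collapse {S T : Scenario} (W : Wiring S T) (β : T.Ctx)
    (r0 : (x : T.El β.1) → W.OPre x.1) (F : ((x : T.El β.1) → W.OPre x.1) → ℝ) :
    ∑ r : (x : T.El β.1) → Fin (Fintype.card (W.OPre x.1)),
      (∏ m : T.El β.1,
        if (Fintype.equivFin (W.OPre m.1)).symm (r m) = r0 m then (1:ℝ) else 0) *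
        F (decAux W β r) = F r0 := by
  classical
  have hprod : ∀ r : (x : T.El β.1) → Fin (Fintype.card (W.OPre x.1)),
      (∏ m : T.El β.1,
        if (Fintype.equivFin (W.OPre m.1)).symm (r m) = r0 m then (1:ℝ) else 0) =
      if r = encAux W β r0 then 1 else 0 := by
    intro r
    rw [Finset.prod_boole]
    have hiff : (∀ m : T.El β.1, m ∈ Finset.univ →
        (Fintype.equivFin (W.OPre m.1)).symm (r m) = r0 m) ↔ r = encAux W β r0 := by
      constructor
      · intro h
        funext x
        exact (Equiv.symm_apply_eq _).mp (h x (Finset.mem_univ x))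
      · intro h m _
        rw [h]
        exact congrFun (decAux_encAux W β r0) m
    simp only [hiff]
  simp only [hprod, ite_mul, one_mul, zero_mul, Finset.sum_ite_eq', Finset.mem_univ,
    if_true, decAux_encAux]

lemma group_pre {S T : Scenario} (W : Wiring S T) (β : T.Ctx)
    (L : ((x : T.El β.1) → W.OPre x.1) → ℝ) :
    ∑ o : (x : T.M) → W.OPre x, W.pPre o * L (fun m => o m.1)
      = ∑ r : (x : T.El β.1) → W.OPre x.1, W.preB β r * L r := by
  classical
  have h1 : ∀ r : (x : T.El β.1) → W.OPre x.1, W.preB β r * L r =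
      ∑ o : (x : T.M) → W.OPre x,
        (if (fun x : T.El β.1 => o x.1) = r then W.pPre o * L r else 0) := by
    intro r
    unfold Wiring.preB
    rw [Finset.sum_mul]
    exact Finset.sum_congr rfl fun o _ => by split <;> simp
  simp only [h1]
  rw [Finset.sum_comm]
  exact Finset.sum_congr rfl fun o _ => by rw [Finset.sum_ite_eq]; simp

lemma main_eq {S T : Scenario} (W : Wiring S T) (B : Behavior S) (β : T.Ctx) (t : T.JO β.1) :
    W.apply B β t =
      ∑ a : HVtype W,
        (W.pPre a.1 * ∏ β' : T.Ctx, ∏ r', W.q β' r' (a.2 β' r')) *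
          KKaux W B β t (fun m => a.1 m.1) (a.2 β (fun m => a.1 m.1)) := by
  classical
  rw [Fintype.sum_prod_type]
  have step1 : ∀ o : (x : T.M) → W.OPre x,
      (∑ φf : (β' : T.Ctx) → (r' : (x : T.El β'.1) → W.OPre x.1) → Fin (W.nPhi β' r'),
        (W.pPre o * ∏ β' : T.Ctx, ∏ r', W.q β' r' (φf β' r')) *
          KKaux W B β t (fun m => o m.1) (φf β (fun m => o m.1)))
      = W.pPre o * Laux W B β t (fun m => o m.1) := by
    intro o
    have A := aux_marg
      (κ := fun β' : T.Ctx => (r' : (x : T.El β'.1) → W.OPre x.1) → Fin (W.nPhi β' r'))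
      (fun β' g => ∏ r', W.q β' r' (g r'))
      (fun β' => aux_sum_one _ (W.q_sum β')) β
      (fun g => W.pPre o * KKaux W B β t (fun m => o m.1) (g (fun m => o m.1)))
    have A2 := aux_marg (W.q β) (W.q_sum β) (fun m => o m.1)
      (fun φ => W.pPre o * KKaux W B β t (fun m => o m.1) φ)
    have hre : ∀ φf : (β' : T.Ctx) → (r' : (x : T.El β'.1) → W.OPre x.1) → Fin (W.nPhi β' r'),
        (W.pPre o * ∏ β' : T.Ctx, ∏ r', W.q β' r' (φf β' r')) *
          KKaux W B β t (fun m => o m.1) (φf β (fun m => o m.1))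
        = (∏ β' : T.Ctx, ∏ r', W.q β' r' (φf β' r')) *
          (W.pPre o * KKaux W B β t (fun m => o m.1) (φf β (fun m => o m.1))) :=
      fun φf => by ring
    simp only [hre]
    rw [A, A2]
    unfold Laux
    rw [Finset.mul_sum]
    exact Finset.sum_congr rfl fun φ _ => by ring
  simp only [step1]
  rw [group_pre W β (Laux W B β t)]
  unfold Wiring.apply
  refine Finset.sum_congr rfl fun r _ => ?_
  unfold Laux KKaux
  simp only [Finset.mul_sum]
  rw [Finset.sum_comm]
  exact Finset.sum_congr rfl fun s _ => Finset.sum_congr rfl fun φ _ => by ring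

set_option maxHeartbeats 1000000 in
/-- every noncontextual wiring admits a common-source-of-randomness
representation: there are a finite set `Λ = Fin k`, a distribution `p` on it,
pre-processing response functions `preR`, wiring functions `f'`, `w'` (of the shape
required of `f` and `g` in the wiring definition), and post-processing response
functions `postR`, all sharing the single source of randomness `λ`, reproducing `W(B)`
for every input behavior `B`. -/
theorem statement_10 (S T : Scenario) (W : Wiring S T) :
    ∃ (k : ℕ) (p : Fin k → ℝ) (nO : T.M → ℕ)
      (preR : (x : T.M) → Fin k → Fin (nO x) → ℝ)
      (f' : (β : T.Ctx) → ((x : T.El β.1) → Fin (nO x.1)) → S.Ctx)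
      (w' : (β : T.Ctx) → (r : (x : T.El β.1) → Fin (nO x.1)) → (m : T.El β.1) →
        S.El (f' β r).1)
      (postR : (β : T.Ctx) → (r : (x : T.El β.1) → Fin (nO x.1)) → (m : T.El β.1) →
        Fin k → S.O (w' β r m).1 → T.O m.1 → ℝ),
      (∀ l, 0 ≤ p l) ∧ (∑ l, p l = 1) ∧
      (∀ x : T.M, 0 < nO x) ∧
      (∀ x l, (∀ o, 0 ≤ preR x l o) ∧ (∑ o, preR x l o = 1)) ∧
      (∀ β r m l o, (∀ u, 0 ≤ postR β r m l o u) ∧ (∑ u, postR β r m l o u = 1)) ∧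
      (∀ (B : Behavior S) (β : T.Ctx) (t : T.JO β.1),
        W.apply B β t =
          ∑ l, p l *
            ∑ r : (x : T.El β.1) → Fin (nO x.1),
              (∏ m, preR m.1 l (r m)) *
                ∑ s : S.JO (f' β r).1, B (f' β r) s *
                  ∏ m, postR β r m l (s (w' β r m)) (t m)) := by
  classical
  refine ⟨Fintype.card (HVtype W),
    fun l => W.pPre ((Fintype.equivFin (HVtype W)).symm l).1 *
      ∏ β : T.Ctx, ∏ r, W.q β r (((Fintype.equivFin (HVtype W)).symm l).2 β r),
    fun x => Fintype.card (W.OPre x),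
    fun x l o => if (Fintype.equivFin (W.OPre x)).symm o =
      ((Fintype.equivFin (HVtype W)).symm l).1 x then 1 else 0,
    fun β r => W.f β (decAux W β r),
    fun β r m => W.wmap β (decAux W β r) m,
    fun β r m l o u => W.resp β (decAux W β r) m
      (((Fintype.equivFin (HVtype W)).symm l).2 β (decAux W β r)) o u,
    ?_, ?_, ?_, ?_, ?_, ?_⟩
  · intro l
    exact mul_nonneg (W.pPre_nonneg _) (Finset.prod_nonneg fun β _ =>
      Finset.prod_nonneg fun r _ => W.q_nonneg _ _ _)
  · rw [Equiv.sum_comp ((Fintype.equivFin (HVtype W)).symm)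
      (fun a : HVtype W => W.pPre a.1 * ∏ β : T.Ctx, ∏ r, W.q β r (a.2 β r))]
    rw [Fintype.sum_prod_type]
    have : ∀ o : (x : T.M) → W.OPre x,
        ∑ φf : (β : T.Ctx) → (r : (x : T.El β.1) → W.OPre x.1) → Fin (W.nPhi β r),
          W.pPre o * ∏ β : T.Ctx, ∏ r, W.q β r (φf β r) = W.pPre o := by
      intro o
      rw [← Finset.mul_sum]
      rw [aux_sum_one (fun β (g : (r : (x : T.El β.1) → W.OPre x.1) → Fin (W.nPhi β r)) =>
        ∏ r, W.q β r (g r)) (fun β => aux_sum_one (W.q β) (W.q_sum β))]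
      ring
    simp only [this]
    exact W.pPre_sum
  · intro x
    exact Fintype.card_pos
  · intro x l
    constructor
    · intro o; dsimp only; split <;> norm_num
    · simp [Equiv.symm_apply_eq, Finset.sum_ite_eq']
  · intro β r m l o
    exact ⟨fun u => W.resp_nonneg _ _ _ _ _ _, W.resp_sum _ _ _ _ _⟩
  · intro B β t
    rw [main_eq W B β t]
    rw [← Equiv.sum_comp ((Fintype.equivFin (HVtype W)).symm)
      (fun a : HVtype W =>
        (W.pPre a.1 * ∏ β' : T.Ctx, ∏ r', W.q β' r' (a.2 β' r')) *
          KKaux W B β t (fun m => a.1 m.1) (a.2 β (fun m => a.1 m.1)))]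
    refine Finset.sum_congr rfl fun l _ => ?_
    have hc := sum_enc_collapse W β (fun m => ((Fintype.equivFin (HVtype W)).symm l).1 m.1)
      (fun r' => KKaux W B β t r' (((Fintype.equivFin (HVtype W)).symm l).2 β r'))
    dsimp only at hc ⊢
    rw [← hc]
    unfold KKaux
    rfl
end
end
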